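/- arXiv:1005.0399 — 3 statements merged into one kernel-verified Lean document; each statement's English description precedes it below -/
import Mathlib

section
/- Let A be a unital commutative C*-algebra, Ω a nonempty finite subset of A, and ε > 0. Then there is a δ > 0 such that whenever d ∈ ℕ and φ : A → ℂ^d is a unital positive linear map satisfying ‖φ(f*f) − φ(f)*φ(f)‖₂ < δ for all f ∈ Ω, there exists a unital algebra homomorphism φ̃ : A → ℂ^d such that ‖φ̃(f) − φ(f)‖₂ < ε for all f ∈ Ω. -/
/-!
Each coordinate `φ_k` of `φ` is a state on `A`. For a state `s`, the positive element
`g = ∑_{f ∈ Ω} |f - s(f)|²` has `s(g) = ∑_f (s(f*f) - |s(f)|²)`, the total variance of `s` on `Ω`.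
The bottom of the spectrum of `g` lies below `s(g)` and, by Gelfand theory, equals `χ(g)` for some
character `χ`; since `χ(g) = ∑_f |χ(f) - s(f)|²`, the character `χ` is as close to `s` on `Ω` as
the variance allows. Taking `ψ = (χ_k)_k`, summing over the coordinates and using Cauchy–Schwarz
to pass from the `ℓ¹`-sum of the defects to their `‖·‖₂`, the choice `δ = ε² / |Ω|` works.
-/

open scoped ComplexOrder

noncomputable section

namespace Sofic

/-- The ℓ²-norm on `ℂ^d` with respect to the uniform probability measure `ζ`. -/
def l2 (d : ℕ) (v : Fin d → ℂ) : ℝ :=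
  Real.sqrt ((∑ k, ‖v k‖ ^ 2) / d)

end Sofic

open WeakDual

section StarOrderedRing

variable {R M F : Type*} [NonUnitalSemiring R] [PartialOrder R] [StarRing R] [StarOrderedRing R]
  [AddCommMonoid M] [PartialOrder M] [IsOrderedAddMonoid M] [FunLike F R M]
  [AddMonoidHomClass F R M]

theorem map_nonneg_of_map_star_mul_self_nonneg (f : F) (hf : ∀ b, 0 ≤ f (star b * b)) {x : R}
    (hx : 0 ≤ x) : 0 ≤ f x := by
  rw [StarOrderedRing.nonneg_iff] at hx
  induction hx using AddSubmonoid.closure_induction with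
  | mem _ h => obtain ⟨b, rfl⟩ := h; exact hf b
  | zero => simp
  | add _ _ _ _ hx hy => rw [map_add]; exact add_nonneg hx hy

end StarOrderedRing

theorem WeakDual.CharacterSpace.apply_star_mul_self {A : Type*} [CommCStarAlgebra A]
    (χ : characterSpace ℂ A) (a : A) : χ (star a * a) = (‖χ a‖ : ℂ) ^ 2 := by
  rw [map_mul, map_star]
  exact Complex.conj_mul' _

namespace PositiveLinearMap

variable {A : Type*} [CommCStarAlgebra A] [PartialOrder A] [StarOrderedRing A]
  (s : A →ₚ[ℂ] ℂ) (hs : s 1 = 1)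
include hs

theorem exists_character_apply_le {c : A} (hc : IsSelfAdjoint c) :
    ∃ χ : characterSpace ℂ A, (χ c : ℂ) ≤ s c := by
  have : Nontrivial A := ⟨1, 0, fun h => by simp [h] at hs⟩
  set m := sInf (spectrum ℝ c)
  have hm : m ∈ spectrum ℝ c :=
    (spectrum.isCompact c).sInf_mem (ContinuousFunctionalCalculus.spectrum_nonempty c hc)
  have hle : algebraMap ℝ A m ≤ c := (algebraMap_le_iff_le_spectrum hc).2 fun x hx =>
    csInf_le (spectrum.isCompact c).bddBelow hx
  obtain ⟨χ, hχ⟩ := CharacterSpace.mem_spectrum_iff_exists.mp (spectrum.algebraMap_mem ℂ hm)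
  refine ⟨χ, ?_⟩
  calc (χ c : ℂ) = s (algebraMap ℝ A m) := by
        rw [hχ, Algebra.algebraMap_eq_smul_one (A := A) m, map_smul_of_tower, hs,
          Complex.coe_algebraMap, Complex.real_smul, mul_one]
    _ ≤ s c := s.monotone' hle

theorem apply_star_mul_self_sub_eq (f : A) :
    s (star (f - s f • 1) * (f - s f • 1)) = s (star f * f) - star (s f) * s f := by
  have hexpand : star (f - s f • 1) * (f - s f • 1)
      = star f * f - s f • star f - star (s f) • f + (star (s f) * s f) • (1 : A) := by
    simp only [star_sub, star_smul, star_one, sub_mul, mul_sub, smul_mul_assoc,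
      mul_smul_comm, one_mul, mul_one]
    module
  rw [hexpand, map_add, map_sub, map_sub, map_smul, map_smul, map_smul, map_star, hs, smul_eq_mul,
    smul_eq_mul, smul_eq_mul, mul_one]
  ring

theorem exists_character_sum_norm_sub_sq_le (Ω : Finset A) :
    ∃ χ : characterSpace ℂ A,
      ∑ f ∈ Ω, ‖(χ f : ℂ) - s f‖ ^ 2 ≤ ∑ f ∈ Ω, ‖s (star f * f) - star (s f) * s f‖ := by
  set g : A := ∑ f ∈ Ω, star (f - s f • 1) * (f - s f • 1)
  obtain ⟨χ, hχ⟩ := s.exists_character_apply_le hs <|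
    isSelfAdjoint_sum Ω fun f _ => IsSelfAdjoint.star_mul_self _
  have hχg : (χ g : ℂ) = ((∑ f ∈ Ω, ‖(χ f : ℂ) - s f‖ ^ 2 : ℝ) : ℂ) := by
    simp only [g, map_sum, CharacterSpace.apply_star_mul_self, map_sub, map_smul, map_one,
      smul_eq_mul, mul_one]
    push_cast
    rfl
  have hsg : s g = ∑ f ∈ Ω, (s (star f * f) - star (s f) * s f) := by
    simp only [g, map_sum, s.apply_star_mul_self_sub_eq hs]
  rw [hχg, hsg] at hχ
  refine ⟨χ, ?_⟩
  calc ∑ f ∈ Ω, ‖(χ f : ℂ) - s f‖ ^ 2 ≤ (∑ f ∈ Ω, (s (star f * f) - star (s f) * s f)).re :=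
        Complex.ofReal_re (∑ f ∈ Ω, ‖(χ f : ℂ) - s f‖ ^ 2) ▸ (Complex.le_def.mp hχ).1
    _ ≤ ‖∑ f ∈ Ω, (s (star f * f) - star (s f) * s f)‖ := Complex.re_le_norm _
    _ ≤ ∑ f ∈ Ω, ‖s (star f * f) - star (s f) * s f‖ := norm_sum_le _ _

end PositiveLinearMap

namespace Sofic

theorem l2_nonneg (d : ℕ) (v : Fin d → ℂ) : 0 ≤ l2 d v := Real.sqrt_nonneg _

theorem l2_sq (d : ℕ) (v : Fin d → ℂ) : l2 d v ^ 2 = (∑ k, ‖v k‖ ^ 2) / d :=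
  Real.sq_sqrt (by positivity)

theorem sum_norm_div_le_l2 (d : ℕ) (v : Fin d → ℂ) : (∑ k, ‖v k‖) / d ≤ l2 d v := by
  rw [l2, Real.le_sqrt (by positivity) (by positivity)]
  have hcs := sq_sum_le_card_mul_sum_sq (s := Finset.univ) (f := fun k => ‖v k‖)
  rw [Finset.card_univ, Fintype.card_fin] at hcs
  rcases Nat.eq_zero_or_pos d with rfl | hd
  · simp
  calc ((∑ k, ‖v k‖) / d) ^ 2 = (∑ k, ‖v k‖) ^ 2 / d / d := by ring
    _ ≤ d * (∑ k, ‖v k‖ ^ 2) / d / d := by gcongr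
    _ = (∑ k, ‖v k‖ ^ 2) / d := by field_simp

/-- Lemma 3.3 (`L-mult perturbation`): let `A` be a unital commutative C*-algebra, `Ω` a
nonempty finite subset of `A` and `ε > 0`.  Then there is a `δ > 0` such that whenever
`d ∈ ℕ` and `φ : A → ℂ^d` is a unital positive linear map satisfying
`‖φ(f*f) − φ(f)*φ(f)‖₂ < δ` for all `f ∈ Ω`, there exists a unital homomorphism
`φ̃ : A → ℂ^d` with `‖φ̃(f) − φ(f)‖₂ < ε` for all `f ∈ Ω`. -/
theorem stmt4 {A : Type*} [NormedCommRing A] [StarRing A] [CStarRing A]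
    [NormedAlgebra ℂ A] [StarModule ℂ A] [CompleteSpace A]
    (Ω : Finset A) (hΩ : Ω.Nonempty) (ε : ℝ) (hε : 0 < ε) :
    ∃ δ > (0 : ℝ), ∀ (d : ℕ) (φ : A →ₗ[ℂ] (Fin d → ℂ)),
      φ 1 = 1 →
      (∀ b : A, ∀ k, 0 ≤ φ (star b * b) k) →
      (∀ f ∈ Ω, l2 d (φ (star f * f) - star (φ f) * φ f) < δ) →
      ∃ ψ : A →ₐ[ℂ] (Fin d → ℂ), ∀ f ∈ Ω, l2 d (ψ f - φ f) < ε := by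
  let _ : CommCStarAlgebra A := {}
  let _ := CStarAlgebra.spectralOrder A
  have _ := CStarAlgebra.spectralOrderedRing A
  have hcard : (0 : ℝ) < Ω.card := by exact_mod_cast hΩ.card_pos
  refine ⟨ε ^ 2 / Ω.card, by positivity, fun d φ hφ1 hφpos hδ => ?_⟩
  let s (k : Fin d) : A →ₚ[ℂ] ℂ := .mk₀ ((LinearMap.proj k).comp φ) fun _ =>
    map_nonneg_of_map_star_mul_self_nonneg _ fun b => hφpos b k
  choose χ hχ using fun k => (s k).exists_character_sum_norm_sub_sq_le (congrFun hφ1 k) Ω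
  refine ⟨AlgHom.pi fun k => CharacterSpace.toAlgHom (χ k), fun f hf => ?_⟩
  set defect : A → Fin d → ℂ := fun f => φ (star f * f) - star (φ f) * φ f
  rw [← pow_lt_pow_iff_left₀ (l2_nonneg _ _) hε.le two_ne_zero, l2_sq]
  calc (∑ k, ‖(χ k f : ℂ) - φ f k‖ ^ 2) / d
      ≤ (∑ k, ∑ f' ∈ Ω, ‖(χ k f' : ℂ) - φ f' k‖ ^ 2) / d := by
        gcongr with k
        exact Finset.single_le_sum (f := fun f' => ‖(χ k f' : ℂ) - φ f' k‖ ^ 2)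
          (fun _ _ => by positivity) hf
    _ ≤ (∑ k, ∑ f' ∈ Ω, ‖defect f' k‖) / d := by gcongr (∑ k, ?_) / _ with k; exact hχ k
    _ = ∑ f' ∈ Ω, (∑ k, ‖defect f' k‖) / d := by rw [Finset.sum_comm, Finset.sum_div]
    _ ≤ ∑ f' ∈ Ω, l2 d (defect f') := by gcongr with f'; exact sum_norm_div_le_l2 d _
    _ < ∑ _f' ∈ Ω, ε ^ 2 / Ω.card := Finset.sum_lt_sum_of_nonempty hΩ hδ
    _ = ε ^ 2 := by rw [Finset.sum_const, nsmul_eq_mul]; field_simp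

end Sofic
end
end

section
/- Let P be a finite partition of unity in C(X). Then h_Σ(P) = sup_{ε>0} inf_F inf_{δ>0} limsup_{i→∞} (1/d_i) log N_ε(Hom(P,F,δ,σ_i), ρ_{P,∞}), where ρ_{P,∞}(φ,ψ) = max_{p∈P}‖φ(p) − ψ(p)‖_∞ and F ranges over nonempty finite subsets of G. -/
open MeasureTheory Filter
open scoped ENNReal ComplexOrder

noncomputable section

namespace Sofic

/-- The sup-norm on `ℂ^d`. -/
def linf (d : ℕ) (v : Fin d → ℂ) : ℝ := ⨆ k, ‖v k‖

/-- The uniform probability state `ζ` on `ℂ^d`. -/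
def unif (d : ℕ) (v : Fin d → ℂ) : ℂ := (∑ k, v k) / d

/-- The induced action of a permutation of `{1,…,d}` on `ℂ^d`: `σ_s(f) = f ∘ σ_s⁻¹`. -/
def permAct {d : ℕ} (π : Equiv.Perm (Fin d)) (v : Fin d → ℂ) : Fin d → ℂ :=
  fun k => v (π⁻¹ k)

/-- `N_ε(S,ρ)`: the maximal cardinality of a finite `ε`-separated subset of `S` with
respect to the pseudometric `ρ`.  (For `ε = 0` this is the cardinality modulo the relation
of zero distance.) -/
def sepNum {Y : Type*} (S : Set Y) (ρ : Y → Y → ℝ) (ε : ℝ) : ℕ∞ :=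
  ⨆ t ∈ {t : Finset Y | ↑t ⊆ S ∧ ∀ x ∈ t, ∀ y ∈ t, x ≠ y → ε < ρ x y}, (t.card : ℕ∞)

/-- Extended logarithm of an extended natural number: `log 0 = -∞`, `log ∞ = ∞`. -/
def elog (n : ℕ∞) : EReal :=
  if n = ⊤ then (⊤ : EReal) else if n = 0 then (⊥ : EReal)
  else ((Real.log n.toNat : ℝ) : EReal)

/-- A sofic approximation sequence `Σ = {σ_i : G → Sym(d_i)}` for a countable group `G`. -/
structure SoficApprox (G : Type*) [Group G] where
  d : ℕ → ℕ
  σ : ∀ i, G → Equiv.Perm (Fin (d i))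
  d_pos : ∀ i, 0 < d i
  d_tendsto : Tendsto d atTop atTop
  approx_mul : ∀ s t : G, Tendsto
    (fun i => (({k : Fin (d i) | σ i (s * t) k = σ i s (σ i t k)} : Set (Fin (d i))).ncard : ℝ)
      / d i) atTop (nhds 1)
  approx_free : ∀ s t : G, s ≠ t → Tendsto
    (fun i => (({k : Fin (d i) | σ i s k ≠ σ i t k} : Set (Fin (d i))).ncard : ℝ)
      / d i) atTop (nhds 1)

/-- A countable group is sofic if it admits a sofic approximation sequence. -/
def IsSofic (G : Type*) [Group G] : Prop := Nonempty (SoficApprox G)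

variable {G : Type*} [Group G] {X : Type*} [TopologicalSpace X]

/-- The action `α_s(f) = f ∘ s⁻¹` of `G` on `C(X)` induced by a continuous action `T` of
`G` on `X`. -/
def alphaC (T : G → X → X) (hc : ∀ s, Continuous (T s)) (s : G) (f : C(X, ℂ)) : C(X, ℂ) :=
  f.comp ⟨T s⁻¹, hc s⁻¹⟩

/-- A real-valued continuous function viewed as an element of `C(X,ℂ)`. -/
def cplx (f : C(X, ℝ)) : C(X, ℂ) :=
  ⟨fun x => (f x : ℂ), Complex.continuous_ofReal.comp f.continuous⟩

/-- The pseudometric `ρ_S` on unital homomorphisms `C(X) → ℂ^d` associated to a sequence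
`S = {p_n}_{n≥1}` in the unit ball of `C_ℝ(X)` (here `p n` is `p_{n+1}`). -/
def rhoSeqC {d : ℕ} (p : ℕ → C(X, ℝ)) (φ ψ : C(X, ℂ) →ₐ[ℂ] (Fin d → ℂ)) : ℝ :=
  ∑' n : ℕ, (1 / 2) ^ (n + 1) * l2 d (φ (cplx (p n)) - ψ (cplx (p n)))

/-- `Hom(S,F,δ,σ)` (Definition 4.1): unital homomorphisms `φ : C(X) → ℂ^d` such that
`Σ_n 2^{-n} ‖φ(α_s(p_n)) − σ_s(φ(p_n))‖₂ < δ` for all `s ∈ F`. -/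
def HomTop (T : G → X → X) (hc : ∀ s, Continuous (T s)) (p : ℕ → C(X, ℝ))
    (F : Finset G) (δ : ℝ) {d : ℕ} (σ : G → Equiv.Perm (Fin d)) :
    Set (C(X, ℂ) →ₐ[ℂ] (Fin d → ℂ)) :=
  {φ | ∀ s ∈ F,
    ∑' n : ℕ, (1 / 2) ^ (n + 1) *
      l2 d (φ (alphaC T hc s (cplx (p n))) - permAct (σ s) (φ (cplx (p n)))) < δ}

/-- The topological entropy `h_Σ(S)` of a sequence `S` in the unit ball of `C_ℝ(X)`
(Definition 4.2). -/
def hTop (T : G → X → X) (hc : ∀ s, Continuous (T s)) (SA : SoficApprox G)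
    (p : ℕ → C(X, ℝ)) : EReal :=
  ⨆ ε : {ε : ℝ // 0 < ε}, ⨅ F : {F : Finset G // F.Nonempty}, ⨅ δ : {δ : ℝ // 0 < δ},
    limsup (fun i => ((((SA.d i : ℝ))⁻¹ : ℝ) : EReal) *
      elog (sepNum (HomTop T hc p (F : Finset G) (δ : ℝ) (SA.σ i)) (rhoSeqC p) (ε : ℝ)))
      atTop

/-- A sequence in the unit ball of `C_ℝ(X)` is dynamically generating if it is not
contained in any proper `G`-invariant closed unital *-subalgebra of `C(X)`. -/
def DynGenTop (T : G → X → X) (hc : ∀ s, Continuous (T s)) (p : ℕ → C(X, ℝ)) : Prop :=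
  ∀ A : StarSubalgebra ℂ C(X, ℂ), IsClosed (A : Set C(X, ℂ)) →
    (∀ (s : G) f, f ∈ A → alphaC T hc s f ∈ A) → (∀ n, cplx (p n) ∈ A) → A = ⊤

/-- The pseudometric `ρ_P(φ,ψ) = max_{p ∈ P} ‖φ(p) − ψ(p)‖₂` for a finite partition of
unity `P` in `C(X)`. -/
def rhoPartC {n d : ℕ} (P : Fin n → C(X, ℂ)) (φ ψ : C(X, ℂ) →ₐ[ℂ] (Fin d → ℂ)) : ℝ :=
  ⨆ i : Fin n, l2 d (φ (P i) - ψ (P i))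

/-- The pseudometric `ρ_{P,∞}(φ,ψ) = max_{p ∈ P} ‖φ(p) − ψ(p)‖_∞`. -/
def rhoPartCinf {n d : ℕ} (P : Fin n → C(X, ℂ)) (φ ψ : C(X, ℂ) →ₐ[ℂ] (Fin d → ℂ)) : ℝ :=
  ⨆ i : Fin n, linf d (φ (P i) - ψ (P i))

/-- `Hom(P,F,δ,σ)` (Definition 4.7) for a finite partition of unity `P` in `C(X)`. -/
def HomTopP (T : G → X → X) (hc : ∀ s, Continuous (T s)) {n : ℕ} (P : Fin n → C(X, ℂ))
    (F : Finset G) (δ : ℝ) {d : ℕ} (σ : G → Equiv.Perm (Fin d)) :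
    Set (C(X, ℂ) →ₐ[ℂ] (Fin d → ℂ)) :=
  {φ | ∀ i : Fin n, ∀ s ∈ F,
    l2 d (φ (alphaC T hc s (P i)) - permAct (σ s) (φ (P i))) < δ}

/-- The topological entropy `h_Σ(P)` of a finite partition of unity `P` in `C(X)`
(Definition 4.7). -/
def hTopP (T : G → X → X) (hc : ∀ s, Continuous (T s)) (SA : SoficApprox G) {n : ℕ}
    (P : Fin n → C(X, ℂ)) : EReal :=
  ⨆ ε : {ε : ℝ // 0 < ε}, ⨅ F : {F : Finset G // F.Nonempty}, ⨅ δ : {δ : ℝ // 0 < δ},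
    limsup (fun i => ((((SA.d i : ℝ))⁻¹ : ℝ) : EReal) *
      elog (sepNum (HomTopP T hc P (F : Finset G) (δ : ℝ) (SA.σ i)) (rhoPartC P) (ε : ℝ)))
      atTop

/-!
Since `ρ_P ≤ ρ_{P,∞}`, one inequality is immediate. For the other, cover a set of homomorphisms
by the `ρ_P`-balls of radius `ε'` around a maximal `ε'`-separated subset. Inside the ball around
`ψ`, Chebyshev's inequality shows that `φ` differs from `ψ` by more than `ε / 2` at no more than
`n d (2ε'/ε)²` coordinates. The values `φ (p) k` are character values of `p`, hence lie in
`[0, 1]`, and recording them on those coordinates, rounded to a grid of mesh `ε`, determines `φ`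
up to `ρ_{P,∞}`-distance `ε`. There are at most `e^{η d}` such records, with `η → 0` as
`ε' → 0`, so `N_ε(·, ρ_{P,∞}) ≤ N_{ε'}(·, ρ_P) e^{η d}`.
-/

section Separation

variable {Y : Type*} {S : Set Y} {ρ ρ' : Y → Y → ℝ} {ε ε' : ℝ}

lemma card_le_sepNum {t : Finset Y} (htS : ↑t ⊆ S)
    (ht : (t : Set Y).Pairwise fun x y => ε < ρ x y) : (t.card : ℕ∞) ≤ sepNum S ρ ε :=
  le_iSup₂ (f := fun (t : Finset Y) (_ : t ∈ {t : Finset Y | ↑t ⊆ S ∧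
    (t : Set Y).Pairwise fun x y => ε < ρ x y}) => (t.card : ℕ∞)) t ⟨htS, ht⟩

lemma sepNum_le_iff {N : ℕ∞} :
    sepNum S ρ ε ≤ N ↔ ∀ t : Finset Y, ↑t ⊆ S →
      (t : Set Y).Pairwise (fun x y => ε < ρ x y) → (t.card : ℕ∞) ≤ N :=
  ⟨fun h _ htS ht => (card_le_sepNum htS ht).trans h, fun h => iSup₂_le fun t ht => h t ht.1 ht.2⟩

lemma sepNum_mono_right (h : ∀ x y, ρ x y ≤ ρ' x y) : sepNum S ρ ε ≤ sepNum S ρ' ε :=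
  sepNum_le_iff.2 fun _ htS ht => card_le_sepNum htS (ht.mono' fun x y hxy => hxy.trans_le (h x y))

lemma exists_card_eq_sepNum (h : sepNum S ρ ε ≠ ⊤) :
    ∃ t : Finset Y, ↑t ⊆ S ∧ (t : Set Y).Pairwise (fun x y => ε < ρ x y) ∧
      (t.card : ℕ∞) = sepNum S ρ ε := by
  unfold sepNum at h ⊢
  rw [iSup_subtype'] at h ⊢
  obtain ⟨⟨t, htS, ht⟩, hmax⟩ :=
    @ENat.exists_eq_iSup_of_lt_top _ _ ⟨⟨∅, by simp⟩⟩ (lt_top_iff_ne_top.2 h)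
  exact ⟨t, htS, ht, hmax⟩

lemma exists_finset_card_eq_sepNum_forall_exists_le (hsymm : ∀ x y, ρ x y = ρ y x)
    (hrefl : ∀ x, ρ x x ≤ ε) (h : sepNum S ρ ε ≠ ⊤) :
    ∃ t : Finset Y, ↑t ⊆ S ∧ (t.card : ℕ∞) = sepNum S ρ ε ∧ ∀ y ∈ S, ∃ x ∈ t, ρ y x ≤ ε := by
  classical
  obtain ⟨t, htS, ht, hcard⟩ := exists_card_eq_sepNum h
  refine ⟨t, htS, hcard, fun y hy => ?_⟩
  by_contra! hfar
  have hyt : y ∉ t := fun hyt => (hfar y hyt).not_ge (hrefl y)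
  have hsep : ((insert y t : Finset Y) : Set Y).Pairwise fun x y => ε < ρ x y := by
    rw [Finset.coe_insert, Set.pairwise_insert_of_notMem hyt]
    exact ⟨ht, fun x hx => ⟨hfar x hx, hsymm x y ▸ hfar x hx⟩⟩
  have := card_le_sepNum (Finset.coe_insert y t ▸ Set.insert_subset hy htS) hsep
  rw [Finset.card_insert_of_notMem hyt, ← hcard] at this
  norm_cast at this
  omega

-- Cover `S` by the `ρ`-balls around a maximal `ε'`-separated set.
lemma sepNum_le_sepNum_mul_of_ball {K : ℕ} (hsymm : ∀ x y, ρ x y = ρ y x)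
    (hrefl : ∀ x, ρ x x ≤ ε') (hK : K ≠ 0)
    (hball : ∀ ψ ∈ S, sepNum {φ | ρ φ ψ ≤ ε'} ρ' ε ≤ K) :
    sepNum S ρ' ε ≤ sepNum S ρ ε' * K := by
  classical
  rcases eq_or_ne (sepNum S ρ ε') ⊤ with htop | hfin
  · rw [htop, ENat.top_mul (by exact_mod_cast hK)]
    exact le_top
  obtain ⟨t, htS, hcard, hcover⟩ :=
    exists_finset_card_eq_sepNum_forall_exists_le hsymm hrefl hfin
  refine sepNum_le_iff.2 fun E hES hE => ?_
  have hsub : E ⊆ t.biUnion fun ψ => E.filter (ρ · ψ ≤ ε') := fun φ hφ => by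
    obtain ⟨ψ, hψ, hφψ⟩ := hcover φ (hES hφ)
    exact Finset.mem_biUnion.2 ⟨ψ, hψ, Finset.mem_filter.2 ⟨hφ, hφψ⟩⟩
  have hpiece : ∀ ψ ∈ t, (E.filter (ρ · ψ ≤ ε')).card ≤ K := fun ψ hψ => by
    have := card_le_sepNum (S := {φ | ρ φ ψ ≤ ε'}) (ρ := ρ') (ε := ε)
      (fun φ hφ => (Finset.mem_filter.1 hφ).2) (hE.mono (Finset.filter_subset _ E))
    exact_mod_cast this.trans (hball ψ (htS hψ))
  rw [← hcard]
  exact_mod_cast (Finset.card_le_card hsub).trans (Finset.card_biUnion_le_card_mul _ _ _ hpiece)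

end Separation

lemma elog_eq_log (N : ℕ∞) : elog N = ENNReal.log N := by
  induction N using ENat.recTopCoe with
  | top => simp [elog]
  | coe k =>
    rcases eq_or_ne k 0 with rfl | hk
    · simp [elog]
    · rw [ENNReal.log_pos_real (by simpa using hk) (by simp)]
      simp [elog, hk]

lemma elog_mono : Monotone elog := fun a b hab => by
  simpa only [elog_eq_log] using ENNReal.log_monotone (ENat.toENNReal_le.2 hab)

lemma elog_le_elog_add_log {a b : ℕ∞} {K : ℕ} (hK : K ≠ 0) (hab : a ≤ b * K) :
    elog a ≤ elog b + (Real.log K : EReal) := by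
  have hlogK : ENNReal.log (K : ℕ∞) = Real.log K := by
    rw [ENNReal.log_pos_real (by simpa using hK) (by simp)]
    simp
  rw [elog_eq_log, elog_eq_log, ← hlogK, ← ENNReal.log_mul_add, ← ENat.toENNReal_mul]
  exact ENNReal.log_monotone (ENat.toENNReal_le.2 hab)

lemma inv_mul_elog_le_inv_mul_elog_add {a b : ℕ∞} {K d : ℕ} {η : ℝ} (hd : 0 < d) (hK : K ≠ 0)
    (hab : a ≤ b * K) (hKd : Real.log K ≤ d * η) :
    (((d : ℝ)⁻¹ : ℝ) : EReal) * elog a ≤ (((d : ℝ)⁻¹ : ℝ) : EReal) * elog b + η := by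
  have hinv : (0 : EReal) ≤ (((d : ℝ)⁻¹ : ℝ) : EReal) := by exact_mod_cast by positivity
  calc (((d : ℝ)⁻¹ : ℝ) : EReal) * elog a
      ≤ (((d : ℝ)⁻¹ : ℝ) : EReal) * (elog b + (Real.log K : EReal)) :=
        mul_le_mul_of_nonneg_left (elog_le_elog_add_log hK hab) hinv
    _ = (((d : ℝ)⁻¹ : ℝ) : EReal) * elog b + (((d : ℝ)⁻¹ * Real.log K : ℝ) : EReal) := by
        rw [EReal.left_distrib_of_nonneg_of_ne_top hinv (EReal.coe_ne_top _), EReal.coe_mul]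
    _ ≤ _ := by
        gcongr
        exact_mod_cast (inv_mul_le_iff₀ (by exact_mod_cast hd)).2 hKd

lemma EReal.le_of_forall_pos_le_add {a b : EReal} (h : ∀ η : ℝ, 0 < η → a ≤ b + η) : a ≤ b := by
  refine EReal.le_of_forall_lt_iff_le.1 fun z hbz => ?_
  induction b with
  | bot => simp [(by simpa using h 1 one_pos : a = ⊥)]
  | coe b =>
    have := h (z - b) (by simpa [sub_pos] using hbz)
    rwa [← EReal.coe_add, add_sub_cancel] at this
  | top => exact absurd hbz (not_lt.2 le_top)

lemma iSup_iInf_limsup_le_of_forall_le_add {α ι κ β : Type*} {l : Filter β} [l.NeBot]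
    {f g : α → ι → κ → β → EReal}
    (h : ∀ a, ∀ η : ℝ, 0 < η → ∃ a', ∀ F δ i, f a F δ i ≤ g a' F δ i + η) :
    ⨆ a, ⨅ F, ⨅ δ, limsup (f a F δ) l ≤ ⨆ a, ⨅ F, ⨅ δ, limsup (g a F δ) l := by
  refine iSup_le fun a => EReal.le_of_forall_pos_le_add fun η hη => ?_
  obtain ⟨a', ha'⟩ := h a η hη
  refine le_trans ?_ (add_le_add_left (le_iSup (fun a => ⨅ F, ⨅ δ, limsup (g a F δ) l) a') _)
  rw [← EReal.sub_le_iff_le_add (.inl (EReal.coe_ne_bot η)) (.inl (EReal.coe_ne_top η))]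
  refine le_iInf₂ fun F δ => EReal.sub_le_of_le_add ?_
  calc ⨅ F, ⨅ δ, limsup (f a F δ) l ≤ limsup (f a F δ) l :=
        (iInf_le _ F).trans (iInf_le _ δ)
    _ ≤ limsup (g a' F δ + fun _ => (η : EReal)) l :=
        limsup_le_limsup (Eventually.of_forall (ha' F δ))
    _ ≤ limsup (g a' F δ) l + limsup (fun _ => (η : EReal)) l :=
        EReal.limsup_add_le (by simp) (by simp)
    _ = limsup (g a' F δ) l + η := by rw [limsup_const]

section Sparse

open Finset

variable (ι V : Type*) [Fintype ι] [DecidableEq ι] [Fintype V]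

def sparseFunctions (m : ℕ) : Finset (ι → Option V) :=
  {r | #{k | (r k).isSome} ≤ m}

lemma card_sparseFunctions_ne_zero (m : ℕ) : #(sparseFunctions ι V m) ≠ 0 :=
  card_ne_zero.2 ⟨fun _ => none, by simp [sparseFunctions]⟩

-- Weight `r` by `c ^ #(support r)`: summed over all `r` this is `(1 + |V| c) ^ |ι|`.
lemma card_sparseFunctions_mul_pow_le (m : ℕ) {c : ℝ} (h0 : 0 ≤ c) (h1 : c ≤ 1) :
    (#(sparseFunctions ι V m) : ℝ) * c ^ m ≤ (1 + Fintype.card V * c) ^ Fintype.card ι := by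
  let w : Option V → ℝ := fun o => c ^ (if o.isSome then 1 else 0)
  calc (#(sparseFunctions ι V m) : ℝ) * c ^ m
      = ∑ r ∈ sparseFunctions ι V m, c ^ m := by rw [sum_const, nsmul_eq_mul]
    _ ≤ ∑ r ∈ sparseFunctions ι V m, c ^ #{k | (r k).isSome} :=
        sum_le_sum fun r hr => pow_le_pow_of_le_one h0 h1 (by simpa [sparseFunctions] using hr)
    _ ≤ ∑ r : ι → Option V, c ^ #{k | (r k).isSome} :=
        sum_le_sum_of_subset_of_nonneg (subset_univ (sparseFunctions ι V m))
          fun _ _ _ => pow_nonneg h0 _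
    _ = ∑ r : ι → Option V, ∏ k, w (r k) := by
        refine sum_congr rfl fun r _ => ?_
        rw [prod_pow_eq_pow_sum, sum_boole, Nat.cast_id]
    _ = ∏ _k : ι, ∑ o, w o := (Fintype.prod_sum fun _ => w).symm
    _ = (1 + Fintype.card V * c) ^ Fintype.card ι := by
        simp [w, Fintype.sum_option, prod_const]

lemma log_card_sparseFunctions_le {m : ℕ} {κ c : ℝ} (hm : m ≤ κ * Fintype.card ι)
    (h0 : 0 < c) (h1 : c ≤ 1) :
    Real.log #(sparseFunctions ι V m) ≤
      Fintype.card ι * (Fintype.card V * c - κ * Real.log c) := by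
  have hK : (0 : ℝ) < #(sparseFunctions ι V m) := by
    exact_mod_cast Nat.pos_of_ne_zero (card_sparseFunctions_ne_zero ι V m)
  have hlogc : Real.log c ≤ 0 := Real.log_nonpos h0.le h1
  have hcount := Real.log_le_log (by positivity) (card_sparseFunctions_mul_pow_le ι V m h0.le h1)
  rw [Real.log_mul hK.ne' (by positivity), Real.log_pow, Real.log_pow] at hcount
  have hlog1 := Real.log_le_sub_one_of_pos
    (by positivity : (0 : ℝ) < 1 + Fintype.card V * c)
  nlinarith [mul_le_mul_of_nonpos_right hm hlogc]

lemma exists_log_card_sparseFunctions_le {η : ℝ} (hη : 0 < η) :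
    ∃ κ > 0, ∀ d m : ℕ, (m : ℝ) ≤ κ * d →
      Real.log #(sparseFunctions (Fin d) V m) ≤ d * η := by
  have hQ : (0 : ℝ) ≤ Fintype.card V := Nat.cast_nonneg _
  set c : ℝ := η / (2 * Fintype.card V + η)
  have hc0 : 0 < c := by positivity
  have hc1 : c ≤ 1 := div_le_one_of_le₀ (by linarith) (by positivity)
  have hQc : Fintype.card V * c ≤ η / 2 := by
    rw [mul_div_assoc', div_le_div_iff₀ (by positivity) two_pos]
    nlinarith
  have hL : 0 ≤ -Real.log c := neg_nonneg.2 (Real.log_nonpos hc0.le hc1)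
  refine ⟨η / (2 * (-Real.log c + 1)), by positivity, fun d m hm => ?_⟩
  refine (log_card_sparseFunctions_le (Fin d) V (by rwa [Fintype.card_fin]) hc0 hc1).trans ?_
  rw [Fintype.card_fin]
  refine mul_le_mul_of_nonneg_left ?_ (Nat.cast_nonneg d)
  have hκL : η / (2 * (-Real.log c + 1)) * -Real.log c ≤ η / 2 := by
    rw [div_mul_eq_mul_div, div_le_div_iff₀ (by positivity) two_pos]
    nlinarith
  linarith

end Sparse

section PartitionOfUnity

open Finset

variable {n d : ℕ} {P : Fin n → C(X, ℂ)}

lemma AlgHom.apply_mem_range {ι : Type*} (φ : C(X, ℂ) →ₐ[ℂ] (ι → ℂ)) (f : C(X, ℂ)) (k : ι) :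
    φ f k ∈ Set.range f := by
  rw [← ContinuousMap.spectrum_eq_range]
  exact AlgHom.apply_mem_spectrum ((Pi.evalAlgHom ℂ (fun _ : ι => ℂ) k).comp φ) f

def quantize (ε : ℝ) (z : ℂ) : Fin (⌊1 / ε⌋₊ + 1) :=
  Fin.clamp ⌊z.re / ε⌋₊ ⌊1 / ε⌋₊

lemma norm_sub_lt_of_quantize_eq {ε : ℝ} (hε : 0 < ε) {z w : ℂ} (hz : z ∈ Set.Icc 0 1)
    (hw : w ∈ Set.Icc 0 1) (h : quantize ε z = quantize ε w) : ‖z - w‖ < ε := by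
  obtain ⟨⟨hz0, hzi⟩, hz1, -⟩ := And.intro (Complex.le_def.1 hz.1) (Complex.le_def.1 hz.2)
  obtain ⟨⟨hw0, hwi⟩, hw1, -⟩ := And.intro (Complex.le_def.1 hw.1) (Complex.le_def.1 hw.2)
  simp only [Complex.zero_re, Complex.zero_im, Complex.one_re] at hz0 hzi hz1 hw0 hwi hw1
  have hcap : ∀ x : ℝ, x ≤ 1 → ⌊x / ε⌋₊ ≤ ⌊1 / ε⌋₊ := fun x hx =>
    Nat.floor_le_floor (div_le_div_of_nonneg_right hx hε.le)
  have hfloor : ⌊z.re / ε⌋₊ = ⌊w.re / ε⌋₊ := by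
    have := congrArg Fin.val h
    rwa [quantize, quantize, Fin.coe_clamp, Fin.coe_clamp, min_eq_left (hcap _ hz1),
      min_eq_left (hcap _ hw1)] at this
  have hint : ⌊z.re / ε⌋ = ⌊w.re / ε⌋ := by
    rw [← Int.natCast_floor_eq_floor (by positivity), ← Int.natCast_floor_eq_floor (by positivity),
      hfloor]
  have hre := Int.abs_sub_lt_one_of_floor_eq_floor hint
  rw [← sub_div, abs_div, abs_of_pos hε, div_lt_one hε] at hre
  have hzw : z - w = ((z.re - w.re : ℝ) : ℂ) := by
    apply Complex.ext <;> simp [← hzi, ← hwi]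
  rwa [hzw, Complex.norm_real, Real.norm_eq_abs]

lemma card_lt_norm_mul_sq_le (v : Fin d → ℂ) {τ : ℝ} (hτ : 0 ≤ τ) :
    (#{k | τ < ‖v k‖} : ℝ) * τ ^ 2 ≤ d * l2 d v ^ 2 := by
  rcases Nat.eq_zero_or_pos d with rfl | hd
  · simp
  rw [l2, Real.sq_sqrt (by positivity), mul_div_cancel₀ _ (by positivity)]
  calc (#{k | τ < ‖v k‖} : ℝ) * τ ^ 2 = ∑ k ∈ {k | τ < ‖v k‖}, τ ^ 2 := by
        rw [Finset.sum_const, nsmul_eq_mul]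
    _ ≤ ∑ k ∈ {k | τ < ‖v k‖}, ‖v k‖ ^ 2 := Finset.sum_le_sum fun k hk =>
        pow_le_pow_left₀ hτ (Finset.mem_filter.1 hk).2.le 2
    _ ≤ ∑ k, ‖v k‖ ^ 2 := Finset.sum_le_sum_of_subset_of_nonneg (Finset.subset_univ _)
        fun _ _ _ => by positivity

lemma l2_le_linf (v : Fin d → ℂ) : l2 d v ≤ linf d v := by
  have h0 : 0 ≤ linf d v := Real.iSup_nonneg fun _ => norm_nonneg _
  refine (Real.sqrt_le_sqrt (div_le_of_le_mul₀ (Nat.cast_nonneg _) (sq_nonneg _) ?_)).trans_eq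
    (Real.sqrt_sq h0)
  calc ∑ k, ‖v k‖ ^ 2 ≤ ∑ _k : Fin d, linf d v ^ 2 := sum_le_sum fun k _ =>
        pow_le_pow_left₀ (norm_nonneg _)
          (le_ciSup (f := fun k => ‖v k‖) (Set.finite_range _).bddAbove k) 2
    _ = linf d v ^ 2 * d := by simp [mul_comm]

lemma rhoPartC_le_rhoPartCinf (φ ψ : C(X, ℂ) →ₐ[ℂ] (Fin d → ℂ)) :
    rhoPartC P φ ψ ≤ rhoPartCinf P φ ψ :=
  ciSup_mono (Set.finite_range _).bddAbove fun _ => l2_le_linf _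

lemma rhoPartC_comm (φ ψ : C(X, ℂ) →ₐ[ℂ] (Fin d → ℂ)) : rhoPartC P φ ψ = rhoPartC P ψ φ := by
  simp only [rhoPartC, l2, Pi.sub_apply, norm_sub_rev]

lemma rhoPartC_self (φ : C(X, ℂ) →ₐ[ℂ] (Fin d → ℂ)) : rhoPartC P φ φ = 0 := by
  simp [rhoPartC, l2]

def ballCode (P : Fin n → C(X, ℂ)) (ψ : C(X, ℂ) →ₐ[ℂ] (Fin d → ℂ)) (ε : ℝ)
    (φ : C(X, ℂ) →ₐ[ℂ] (Fin d → ℂ)) : Fin d → Option (Fin n → Fin (⌊1 / ε⌋₊ + 1)) :=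
  fun k => if ∃ i, ε / 2 < ‖φ (P i) k - ψ (P i) k‖ then some fun i => quantize ε (φ (P i) k)
    else none

lemma rhoPartCinf_le_of_ballCode_eq (hP : ∀ i x, P i x ∈ Set.Icc 0 1) {ε : ℝ} (hε : 0 < ε)
    {ψ φ₁ φ₂ : C(X, ℂ) →ₐ[ℂ] (Fin d → ℂ)} (h : ballCode P ψ ε φ₁ = ballCode P ψ ε φ₂) :
    rhoPartCinf P φ₁ φ₂ ≤ ε := by
  refine Real.iSup_le (fun i => Real.iSup_le (fun k => ?_) hε.le) hε.le
  have hk := congrFun h k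
  simp only [ballCode] at hk
  rw [Pi.sub_apply]
  split_ifs at hk with h₁ h₂ h₂
  · have hval : ∀ φ : C(X, ℂ) →ₐ[ℂ] (Fin d → ℂ), φ (P i) k ∈ Set.Icc 0 1 := fun φ => by
      obtain ⟨x, hx⟩ := AlgHom.apply_mem_range φ (P i) k
      exact hx ▸ hP i x
    exact (norm_sub_lt_of_quantize_eq hε (hval φ₁) (hval φ₂)
      (congrFun (Option.some_injective _ hk) i)).le
  · simp only [not_exists, not_lt] at h₁ h₂
    calc ‖φ₁ (P i) k - φ₂ (P i) k‖
        ≤ ‖φ₁ (P i) k - ψ (P i) k‖ + ‖ψ (P i) k - φ₂ (P i) k‖ :=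
          norm_sub_le_norm_sub_add_norm_sub _ _ _
      _ ≤ ε / 2 + ε / 2 := add_le_add (h₁ i) (norm_sub_rev (φ₂ (P i) k) _ ▸ h₂ i)
      _ = ε := add_halves ε

lemma card_isSome_ballCode_le {ε ε' : ℝ} (hε : 0 < ε) {ψ φ : C(X, ℂ) →ₐ[ℂ] (Fin d → ℂ)}
    (h : rhoPartC P φ ψ ≤ ε') :
    #{k | (ballCode P ψ ε φ k).isSome} ≤ ⌊n * d * (2 * ε' / ε) ^ 2⌋₊ := by
  apply Nat.le_floor
  have hsub : ({k | (ballCode P ψ ε φ k).isSome} : Finset (Fin d)) ⊆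
      univ.biUnion fun i => {k | ε / 2 < ‖(φ (P i) - ψ (P i)) k‖} := fun k hk => by
    simpa [ballCode] using hk
  have hpiece : ∀ i, (#{k | ε / 2 < ‖(φ (P i) - ψ (P i)) k‖} : ℝ) ≤ d * (2 * ε' / ε) ^ 2 := by
    intro i
    have hl2 : l2 d (φ (P i) - ψ (P i)) ≤ ε' :=
      (le_ciSup (Set.finite_range _).bddAbove i).trans h
    have hcheb := card_lt_norm_mul_sq_le (φ (P i) - ψ (P i)) (by positivity : 0 ≤ ε / 2)
    rw [← le_div_iff₀ (by positivity)] at hcheb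
    calc _ ≤ d * l2 d (φ (P i) - ψ (P i)) ^ 2 / (ε / 2) ^ 2 := hcheb
      _ ≤ d * ε' ^ 2 / (ε / 2) ^ 2 := by gcongr; exact Real.sqrt_nonneg _
      _ = d * (2 * ε' / ε) ^ 2 := by field_simp
  calc (#{k | (ballCode P ψ ε φ k).isSome} : ℝ)
      ≤ #(univ.biUnion fun i => ({k | ε / 2 < ‖(φ (P i) - ψ (P i)) k‖} : Finset (Fin d))) := by
        exact_mod_cast card_le_card hsub
    _ ≤ ∑ i, (#{k | ε / 2 < ‖(φ (P i) - ψ (P i)) k‖} : ℝ) := by exact_mod_cast card_biUnion_le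
    _ ≤ ∑ _i : Fin n, d * (2 * ε' / ε) ^ 2 := sum_le_sum fun i _ => hpiece i
    _ = n * d * (2 * ε' / ε) ^ 2 := by simp [mul_assoc]

lemma sepNum_ball_rhoPartCinf_le (hP : ∀ i x, P i x ∈ Set.Icc 0 1) {ε : ℝ} (hε : 0 < ε)
    (ψ : C(X, ℂ) →ₐ[ℂ] (Fin d → ℂ)) (ε' : ℝ) :
    sepNum {φ | rhoPartC P φ ψ ≤ ε'} (rhoPartCinf P) ε ≤
      #(sparseFunctions (Fin d) (Fin n → Fin (⌊1 / ε⌋₊ + 1)) ⌊n * d * (2 * ε' / ε) ^ 2⌋₊) := by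
  refine sepNum_le_iff.2 fun E hE hsep => Nat.cast_le.2 <|
    card_le_card_of_injOn (ballCode P ψ ε) (fun φ hφ => ?_) fun φ₁ h₁ φ₂ h₂ heq => ?_
  · simpa [sparseFunctions] using card_isSome_ballCode_le hε (hE hφ)
  · by_contra hne
    exact (hsep h₁ h₂ hne).not_ge (rhoPartCinf_le_of_ballCode_eq hP hε heq)

lemma sepNum_rhoPartCinf_le_sepNum_rhoPartC_mul (hP : ∀ i x, P i x ∈ Set.Icc 0 1) {ε ε' : ℝ}
    (hε : 0 < ε) (hε' : 0 ≤ ε') (S : Set (C(X, ℂ) →ₐ[ℂ] (Fin d → ℂ))) :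
    sepNum S (rhoPartCinf P) ε ≤ sepNum S (rhoPartC P) ε' *
      #(sparseFunctions (Fin d) (Fin n → Fin (⌊1 / ε⌋₊ + 1)) ⌊n * d * (2 * ε' / ε) ^ 2⌋₊) :=
  sepNum_le_sepNum_mul_of_ball rhoPartC_comm (fun φ => (rhoPartC_self φ).trans_le hε')
    (card_sparseFunctions_ne_zero _ _ _) fun ψ _ => sepNum_ball_rhoPartCinf_le hP hε ψ ε'

lemma mem_Icc_of_sum_eq_one (hPpos : ∀ i x, 0 ≤ P i x) (hPsum : ∑ i, P i = 1) (i : Fin n)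
    (x : X) : P i x ∈ Set.Icc 0 1 := by
  refine ⟨hPpos i x, ?_⟩
  have hx : ∑ j, P j x = 1 := by simpa using congrArg (fun f : C(X, ℂ) => f x) hPsum
  exact hx ▸ Finset.single_le_sum (fun j _ => hPpos j x) (Finset.mem_univ i)

lemma exists_inv_mul_elog_sepNum_rhoPartCinf_le (hP : ∀ i x, P i x ∈ Set.Icc 0 1) {ε η : ℝ}
    (hε : 0 < ε) (hη : 0 < η) :
    ∃ ε' > 0, ∀ {d : ℕ}, 0 < d → ∀ S : Set (C(X, ℂ) →ₐ[ℂ] (Fin d → ℂ)),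
      (((d : ℝ)⁻¹ : ℝ) : EReal) * elog (sepNum S (rhoPartCinf P) ε) ≤
        (((d : ℝ)⁻¹ : ℝ) : EReal) * elog (sepNum S (rhoPartC P) ε') + η := by
  obtain ⟨κ, hκ, hlog⟩ := exists_log_card_sparseFunctions_le (Fin n → Fin (⌊1 / ε⌋₊ + 1)) hη
  refine ⟨ε / 2 * Real.sqrt (κ / (n + 1)), by positivity, fun {d} hd S => ?_⟩
  refine inv_mul_elog_le_inv_mul_elog_add hd (card_sparseFunctions_ne_zero _ _ _)
    (sepNum_rhoPartCinf_le_sepNum_rhoPartC_mul hP hε (by positivity) S) (hlog _ _ ?_)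
  have hsq : (2 * (ε / 2 * Real.sqrt (κ / (n + 1))) / ε) ^ 2 = κ / (n + 1) := by
    rw [show 2 * (ε / 2 * Real.sqrt (κ / (n + 1))) / ε = Real.sqrt (κ / (n + 1)) by
      field_simp, Real.sq_sqrt (by positivity)]
  calc (⌊n * d * (2 * (ε / 2 * Real.sqrt (κ / (n + 1))) / ε) ^ 2⌋₊ : ℝ)
      ≤ n * d * (2 * (ε / 2 * Real.sqrt (κ / (n + 1))) / ε) ^ 2 := Nat.floor_le (by positivity)
    _ = n / (n + 1) * (κ * d) := by rw [hsq]; ring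
    _ ≤ κ * d := mul_le_of_le_one_left (by positivity)
        (div_le_one_of_le₀ (by linarith) (by positivity))

end PartitionOfUnity

theorem stmt9_general
    {X : Type*} [TopologicalSpace X]
    {G : Type*} [Group G]
    (T : G → X → X) (hc : ∀ s : G, Continuous (T s))
    (SA : SoficApprox G)
    {n : ℕ} (P : Fin n → C(X, ℂ))
    (hPpos : ∀ i x, 0 ≤ P i x) (hPsum : ∑ i, P i = 1) :
    hTopP T hc SA P =
      ⨆ ε : {ε : ℝ // 0 < ε}, ⨅ F : {F : Finset G // F.Nonempty}, ⨅ δ : {δ : ℝ // 0 < δ},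
        limsup (fun i => ((((SA.d i : ℝ))⁻¹ : ℝ) : EReal) *
          elog (sepNum (HomTopP T hc P (F : Finset G) (δ : ℝ) (SA.σ i)) (rhoPartCinf P)
            (ε : ℝ))) atTop := by
  apply le_antisymm
  · refine iSup_iInf_limsup_le_of_forall_le_add fun ε η hη => ⟨ε, fun F δ i => ?_⟩
    refine le_add_of_le_of_nonneg (mul_le_mul_of_nonneg_left ?_ ?_) (by exact_mod_cast hη.le)
    · exact elog_mono (sepNum_mono_right rhoPartC_le_rhoPartCinf)
    · exact_mod_cast inv_nonneg.2 (Nat.cast_nonneg _)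
  · refine iSup_iInf_limsup_le_of_forall_le_add fun ε η hη => ?_
    obtain ⟨ε', hε', hle⟩ :=
      exists_inv_mul_elog_sepNum_rhoPartCinf_le (mem_Icc_of_sum_eq_one hPpos hPsum) ε.2 hη
    exact ⟨⟨ε', hε'⟩, fun F δ i => hle (SA.d_pos i) _⟩

/-- Proposition 4.8 (`P-infinity norm`): for a finite partition of unity `P` in `C(X)`,
the topological entropy `h_Σ(P)` can equivalently be computed using the sup-norm
pseudometric `ρ_{P,∞}` in place of `ρ_P`. -/
theorem stmt9
    {X : Type*} [TopologicalSpace X] [CompactSpace X] [TopologicalSpace.MetrizableSpace X]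
    {G : Type*} [Group G] [Countable G]
    (T : G → X → X) (hc : ∀ s : G, Continuous (T s))
    (hT1 : T 1 = id) (hTmul : ∀ s t : G, T (s * t) = T s ∘ T t)
    (SA : SoficApprox G)
    {n : ℕ} (P : Fin n → C(X, ℂ))
    (hPpos : ∀ i x, 0 ≤ P i x) (hPsum : ∑ i, P i = 1) :
    hTopP T hc SA P =
      ⨆ ε : {ε : ℝ // 0 < ε}, ⨅ F : {F : Finset G // F.Nonempty}, ⨅ δ : {δ : ℝ // 0 < δ},
        limsup (fun i => ((((SA.d i : ℝ))⁻¹ : ℝ) : EReal) *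
          elog (sepNum (HomTopP T hc P (F : Finset G) (δ : ℝ) (SA.σ i)) (rhoPartCinf P)
            (ε : ℝ))) atTop :=
  stmt9_general T hc SA P hPpos hPsum

end Sofic
end
end

section
/- Every countable sofic group is surjunctive: if G is a countable sofic group, A is a nonempty finite set, and G acts on A^G by the left shift (sx)_t = x_{s^{-1}t}, then every injective G-equivariant continuous map A^G → A^G is surjective. -/
open MeasureTheory Filter
open scoped ENNReal ComplexOrder

noncomputable section

namespace Sofic

variable {G : Type*} [Group G]

/-- The left shift action of `G` on `B^G`: `(sx)_t = x_{s⁻¹t}`. -/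
def shiftL {B : Type*} (s : G) (x : G → B) : G → B := fun t => x (s⁻¹ * t)

section Aux

private lemma sofic_ncard_eq {n : ℕ} (cond : Fin n → Prop) [DecidablePred cond] :
    ({k | cond k} : Set (Fin n)).ncard = (Finset.univ.filter cond).card := by
  rw [show {k | cond k} = (↑(Finset.univ.filter cond) : Set (Fin n)) by ext k; simp]
  exact Set.ncard_coe_finset _

private lemma sofic_numeric_real {lm L κ B d fr : ℝ} (hL : 0 < L) (hlm : 0 ≤ lm) (hfr : 0 ≤ fr)
    (hκ : 0 ≤ κ) (hB : 0 ≤ B) (hd : 1 ≤ d)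
    (h1 : κ * L ≤ B * lm) (h2 : d ≤ B + fr * κ) (h3 : B * (2 * (L + fr * lm)) ≤ d * L) :
    False := by
  nlinarith [mul_le_mul_of_nonneg_right h2 hL.le, mul_le_mul_of_nonneg_left h1 hfr]

private lemma sofic_lower_bound {d : ℕ} {A : Type*} [Fintype A] [DecidableEq (Fin d → A)]
    (Ψ : (Fin d → A) → (Fin d → A)) (Bad : Finset (Fin d))
    (h : ∀ a b, Ψ a = Ψ b → (∀ k ∈ Bad, a k = b k) → a = b) :
    Fintype.card A ^ d ≤ (Finset.image Ψ Finset.univ).card * Fintype.card A ^ Bad.card := by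
  classical
  set R := Finset.image Ψ Finset.univ with hR
  have hmem : ∀ a, Ψ a ∈ R := fun a => Finset.mem_image.2 ⟨a, Finset.mem_univ a, rfl⟩
  have hinj : Function.Injective (fun a : Fin d → A =>
      ((⟨Ψ a, hmem a⟩ : {b // b ∈ R}), (fun k : ↥Bad => a k))) := by
    intro a b hab
    have h1 : Ψ a = Ψ b := congrArg Subtype.val (congrArg Prod.fst hab)
    have h2 : ∀ k ∈ Bad, a k = b k := by
      intro k hk
      exact congrFun (congrArg Prod.snd hab) ⟨k, hk⟩
    exact h a b h1 h2
  calc Fintype.card A ^ d = Fintype.card (Fin d → A) := by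
        simp [Fintype.card_fun]
    _ ≤ Fintype.card ({b // b ∈ R} × (↥Bad → A)) := Fintype.card_le_of_injective _ hinj
    _ = R.card * Fintype.card A ^ Bad.card := by
        simp [Fintype.card_fun, Fintype.card_coe]

private lemma sofic_upper_bound {d : ℕ} {A : Type*} [Fintype A] {ι : Type*} [Fintype ι]
    [DecidableEq ι]
    (R : Finset (Fin d → A)) (K : Finset (Fin d)) (w : Fin d → ι → Fin d) (p : ι → A)
    (hinj : ∀ k ∈ K, Function.Injective (w k))
    (hdisj : ∀ k ∈ K, ∀ k' ∈ K, k ≠ k' → ∀ g g', w k g ≠ w k' g')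
    (havoid : ∀ b ∈ R, ∀ k ∈ K, ∃ g, b (w k g) ≠ p g) :
    R.card ≤ (Fintype.card A ^ Fintype.card ι - 1) ^ K.card *
      Fintype.card A ^ (d - Fintype.card ι * K.card) := by
  classical
  set U : Finset (Fin d) := K.biUnion (fun k => Finset.image (w k) Finset.univ) with hU
  have hUcard : U.card = Fintype.card ι * K.card := by
    rw [hU, Finset.card_biUnion]
    · rw [Finset.sum_congr rfl (fun k hk => ?_), Finset.sum_const, smul_eq_mul, mul_comm]
      rw [Finset.card_image_of_injective _ (hinj k hk), Finset.card_univ]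
    · intro x hx y hy hxy
      simp only [Finset.disjoint_left]
      intro a ha ha'
      obtain ⟨g, _, hg⟩ := Finset.mem_image.1 ha
      obtain ⟨g', _, hg'⟩ := Finset.mem_image.1 ha'
      exact hdisj x hx y hy hxy g g' (hg.trans hg'.symm)
  have hUle : U ⊆ Finset.univ := Finset.subset_univ _
  set C : Finset (Fin d) := Finset.univ \ U with hC
  have hCcard : C.card = d - Fintype.card ι * K.card := by
    rw [hC, Finset.card_sdiff_of_subset hUle, Finset.card_univ, Fintype.card_fin, hUcard]
  have key : Function.Injective (fun b : ↥R =>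
      ((fun k : ↥K => (⟨fun g => (b : Fin d → A) (w k g),
          by obtain ⟨g, hg⟩ := havoid b b.2 k k.2
             intro hq; exact hg (congrFun hq g)⟩ :
        {q : ι → A // q ≠ p})), (fun j : ↥C => (b : Fin d → A) j))) := by
    intro b b' hb
    have h1 := congrArg Prod.fst hb
    have h2 := congrArg Prod.snd hb
    ext j
    by_cases hj : j ∈ U
    · obtain ⟨k, hk, hj'⟩ := Finset.mem_biUnion.1 hj
      obtain ⟨g, _, hg⟩ := Finset.mem_image.1 hj'
      have := congrArg Subtype.val (congrFun h1 ⟨k, hk⟩)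
      have := congrFun this g
      rw [← hg]
      exact this
    · have hjC : j ∈ C := Finset.mem_sdiff.2 ⟨Finset.mem_univ j, hj⟩
      exact congrFun h2 ⟨j, hjC⟩
  have htarget : Fintype.card ((↥K → {q : ι → A // q ≠ p}) × (↥C → A)) =
      (Fintype.card A ^ Fintype.card ι - 1) ^ K.card *
        Fintype.card A ^ (d - Fintype.card ι * K.card) := by
    have hq : Fintype.card {q : ι → A // q ≠ p} = Fintype.card A ^ Fintype.card ι - 1 := by
      have h0 : Fintype.card {q : ι → A // ¬ q = p} =
          Fintype.card (ι → A) - Fintype.card {q : ι → A // q = p} :=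
        Fintype.card_subtype_compl (fun q : ι → A => q = p)
      simp only [Fintype.card_subtype_eq, Fintype.card_fun] at h0
      convert h0 using 2
    rw [Fintype.card_prod, Fintype.card_fun, Fintype.card_fun, hq, Fintype.card_coe,
      Fintype.card_coe, hCcard]
  calc R.card = Fintype.card ↥R := (Fintype.card_coe R).symm
    _ ≤ _ := Fintype.card_le_of_injective _ key
    _ = _ := htarget

private lemma sofic_greedy {β : Type*} [DecidableEq β] [Fintype β] (Good : Finset β)
    (W : β → Finset β)
    (f : ℕ) (hself : ∀ k ∈ Good, k ∈ W k) (hsize : ∀ k ∈ Good, (W k).card ≤ f)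
    (hcount : ∀ p : β, (Good.filter (fun k => p ∈ W k)).card ≤ f) :
    ∃ K ⊆ Good, (∀ k ∈ K, ∀ k' ∈ K, k ≠ k' → Disjoint (W k) (W k')) ∧
      Good.card ≤ f * f * K.card := by
  classical
  set P : Finset β → Prop := fun K => K ⊆ Good ∧
    ∀ k ∈ K, ∀ k' ∈ K, k ≠ k' → Disjoint (W k) (W k') with hP
  have hne : (Finset.univ.powerset.filter P).Nonempty := by
    refine ⟨∅, Finset.mem_filter.2 ⟨Finset.mem_powerset.2 (Finset.empty_subset _), ?_⟩⟩
    exact ⟨Finset.empty_subset _, fun k hk => absurd hk (Finset.notMem_empty k)⟩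
  obtain ⟨K, hKmem, hKmax⟩ := Finset.exists_max_image _ Finset.card hne
  obtain ⟨-, hKG, hKdisj⟩ : K ∈ Finset.univ.powerset ∧ P K := Finset.mem_filter.1 hKmem
  refine ⟨K, hKG, hKdisj, ?_⟩
  have hblock : ∀ k ∈ Good, ∃ k' ∈ K, ¬ Disjoint (W k) (W k') := by
    intro k hk
    by_contra hcon
    push_neg at hcon
    have hkK : k ∉ K := by
      intro hkK
      exact (Finset.not_disjoint_iff.2 ⟨k, hself k hk, hself k hk⟩) (hcon k hkK)
    have hPins : P (insert k K) := by
      constructor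
      · exact Finset.insert_subset hk hKG
      · intro a ha b hb hab
        rcases Finset.mem_insert.1 ha with ha' | ha' <;>
          rcases Finset.mem_insert.1 hb with hb' | hb'
        · exact absurd (ha'.trans hb'.symm) hab
        · exact ha' ▸ hcon b hb'
        · exact (hb' ▸ (hcon a ha')).symm
        · exact hKdisj a ha' b hb' hab
    have hmem : insert k K ∈ Finset.univ.powerset.filter P :=
      Finset.mem_filter.2 ⟨Finset.mem_powerset.2 (Finset.subset_univ _), hPins⟩
    have := hKmax _ hmem
    rw [Finset.card_insert_of_notMem hkK] at this
    omega
  have hsub : Good ⊆ K.biUnion (fun k' => Good.filter (fun k => ¬ Disjoint (W k) (W k'))) := by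
    intro k hk
    obtain ⟨k', hk', hd⟩ := hblock k hk
    exact Finset.mem_biUnion.2 ⟨k', hk', Finset.mem_filter.2 ⟨hk, hd⟩⟩
  calc Good.card ≤ _ := Finset.card_le_card hsub
    _ ≤ ∑ k' ∈ K, (Good.filter (fun k => ¬ Disjoint (W k) (W k'))).card :=
        Finset.card_biUnion_le
    _ ≤ ∑ _k' ∈ K, f * f := by
        refine Finset.sum_le_sum (fun k' hk' => ?_)
        have hsub2 : Good.filter (fun k => ¬ Disjoint (W k) (W k')) ⊆
            (W k').biUnion (fun p => Good.filter (fun k => p ∈ W k)) := by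
          intro k hk
          obtain ⟨hkG, hd⟩ := Finset.mem_filter.1 hk
          obtain ⟨p, hp1, hp2⟩ := Finset.not_disjoint_iff.1 hd
          exact Finset.mem_biUnion.2 ⟨p, hp2, Finset.mem_filter.2 ⟨hkG, hp1⟩⟩
        calc (Good.filter (fun k => ¬ Disjoint (W k) (W k'))).card
            ≤ _ := Finset.card_le_card hsub2
          _ ≤ ∑ p ∈ W k', (Good.filter (fun k => p ∈ W k)).card := Finset.card_biUnion_le
          _ ≤ ∑ _p ∈ W k', f := Finset.sum_le_sum (fun p _ => hcount p)
          _ = (W k').card * f := by rw [Finset.sum_const, smul_eq_mul]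
          _ ≤ f * f := Nat.mul_le_mul_right f (hsize k' (hKG hk'))
    _ = f * f * K.card := by rw [Finset.sum_const, smul_eq_mul, mul_comm]

variable {A : Type*} [Fintype A] [TopologicalSpace A] [DiscreteTopology A]

private lemma sofic_exists_memory (h : (G → A) → A) (hc : Continuous h) :
    ∃ M : Finset G, ∀ x y : G → A, (∀ g ∈ M, x g = y g) → h x = h y := by
  classical
  have hI : ∀ x : G → A, ∃ I : Finset G, ∀ y, (∀ g ∈ I, y g = x g) → h y = h x := by
    intro x
    have hopen : IsOpen (h ⁻¹' {h x}) := (isOpen_discrete _).preimage hc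
    obtain ⟨I, u, hu, hsub⟩ := isOpen_pi_iff.mp hopen x rfl
    refine ⟨I, fun y hy => ?_⟩
    have : y ∈ (I : Set G).pi u := fun g hg => (hy g hg) ▸ (hu g hg).2
    exact hsub this
  choose I hIspec using hI
  have hcover : (Set.univ : Set (G → A)) ⊆ ⋃ x : G → A, {y | ∀ g ∈ I x, y g = x g} := by
    intro y _
    exact Set.mem_iUnion.2 ⟨y, fun g _ => rfl⟩
  have hopen : ∀ x : G → A, IsOpen {y : G → A | ∀ g ∈ I x, y g = x g} := by
    intro x
    have : {y : G → A | ∀ g ∈ I x, y g = x g} = (I x : Set G).pi (fun g => {x g}) := by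
      ext y; simp [Set.mem_pi]
    rw [this]
    exact isOpen_set_pi (I x).finite_toSet (fun a _ => isOpen_discrete _)
  obtain ⟨T, hT⟩ := isCompact_univ.elim_finite_subcover _ hopen hcover
  refine ⟨T.biUnion I, fun x y hxy => ?_⟩
  obtain ⟨x₀, hx₀T, hx₀⟩ := by
    have := hT (Set.mem_univ x)
    simpa using this
  have h1 : h x = h x₀ := hIspec x₀ x hx₀
  have h2 : h y = h x₀ := by
    refine hIspec x₀ y (fun g hg => ?_)
    rw [← hxy g (Finset.mem_biUnion.2 ⟨x₀, hx₀T, hg⟩)]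
    exact hx₀ g hg
  rw [h1, h2]

private lemma sofic_exists_decoder (Φ : (G → A) → (G → A)) (hcont : Continuous Φ)
    (hinj : Function.Injective Φ) :
    ∃ N : Finset G, ∀ x y : G → A, (∀ g ∈ N, Φ x g = Φ y g) → x 1 = y 1 := by
  classical
  by_contra hcon
  push_neg at hcon
  set K : Finset G → Set ((G → A) × (G → A)) := fun N =>
    {p | (∀ g ∈ N, Φ p.1 g = Φ p.2 g) ∧ p.1 1 ≠ p.2 1} with hK
  have hclosed : ∀ N, IsClosed (K N) := by
    intro N
    have h1 : IsClosed {p : (G → A) × (G → A) | ∀ g ∈ N, Φ p.1 g = Φ p.2 g} := by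
      have : {p : (G → A) × (G → A) | ∀ g ∈ N, Φ p.1 g = Φ p.2 g} =
          ⋂ g ∈ (N : Set G), {p | Φ p.1 g = Φ p.2 g} := by
        ext p; simp
      rw [this]
      refine isClosed_biInter (fun g _ => ?_)
      exact isClosed_eq ((continuous_apply g).comp (hcont.comp continuous_fst))
        ((continuous_apply g).comp (hcont.comp continuous_snd))
    have h2 : IsClosed {p : (G → A) × (G → A) | p.1 1 ≠ p.2 1} := by
      have : {p : (G → A) × (G → A) | p.1 1 ≠ p.2 1} =
          (fun p : (G → A) × (G → A) => (p.1 1, p.2 1)) ⁻¹' {q : A × A | q.1 ≠ q.2} := rfl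
      rw [this]
      exact IsClosed.preimage (((continuous_apply 1).comp continuous_fst).prodMk
        ((continuous_apply 1).comp continuous_snd)) (isClosed_discrete _)
    exact h1.inter h2
  have hne : ∀ N, (K N).Nonempty := by
    intro N
    obtain ⟨x, y, hxy, hne⟩ := hcon N
    exact ⟨(x, y), hxy, hne⟩
  have hdir : Directed (fun x1 x2 => x1 ⊇ x2) K := by
    intro N₁ N₂
    refine ⟨N₁ ∪ N₂, ?_, ?_⟩
    · intro p hp; exact ⟨fun g hg => hp.1 g (Finset.mem_union_left _ hg), hp.2⟩
    · intro p hp; exact ⟨fun g hg => hp.1 g (Finset.mem_union_right _ hg), hp.2⟩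
  obtain ⟨p, hp⟩ := IsCompact.nonempty_iInter_of_directed_nonempty_isCompact_isClosed K hdir hne
    (fun N => (hclosed N).isCompact) hclosed
  have hΦ : Φ p.1 = Φ p.2 := by
    funext g
    exact (Set.mem_iInter.mp hp {g}).1 g (Finset.mem_singleton_self g)
  exact (Set.mem_iInter.mp hp ∅).2 (congrFun (hinj hΦ) 1 ▸ rfl)

private lemma sofic_exists_forbidden (Φ : (G → A) → (G → A)) (hcont : Continuous Φ)
    (hnsurj : ¬ Function.Surjective Φ) :
    ∃ (F : Finset G) (z : G → A), (1 : G) ∈ F ∧ ∀ x : G → A, ∃ g ∈ F, Φ x g ≠ z g := by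
  classical
  obtain ⟨z, hz⟩ := not_forall.mp hnsurj
  have hz' : z ∉ Set.range Φ := by
    intro ⟨x, hx⟩; exact hz ⟨x, hx⟩
  have hclosed : IsClosed (Set.range Φ) := by
    have : Set.range Φ = Φ '' Set.univ := (Set.image_univ).symm
    rw [this]
    exact (isCompact_univ.image hcont).isClosed
  obtain ⟨I, u, hu, hsub⟩ := isOpen_pi_iff.mp hclosed.isOpen_compl z hz'
  refine ⟨insert 1 I, z, Finset.mem_insert_self 1 I, fun x => ?_⟩
  by_contra hcon
  push_neg at hcon
  have : Φ x ∈ (I : Set G).pi u := by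
    intro g hg
    rw [hcon g (Finset.mem_insert_of_mem hg)]
    exact (hu g hg).2
  exact (hsub this) ⟨x, rfl⟩

end Aux

set_option maxHeartbeats 1000000 in
/-- Gromov's theorem: every countable sofic group is surjunctive.  If `G` is a countable
sofic group, `A` a nonempty finite set and `G` acts on `A^G` by the left shift, then every
injective `G`-equivariant continuous map `A^G → A^G` is surjective. -/
theorem stmt13
    {G : Type*} [Group G] [Countable G] (hsofic : IsSofic G)
    {A : Type*} [Fintype A] [Nonempty A] [TopologicalSpace A] [DiscreteTopology A]
    (Φ : (G → A) → (G → A)) (hcont : Continuous Φ)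
    (hequi : ∀ (s : G) (x : G → A), Φ (shiftL s x) = shiftL s (Φ x))
    (hinj : Function.Injective Φ) :
    Function.Surjective Φ := by
  classical
  by_contra hnsurj
  -- trivial case: at most one letter
  rcases le_or_gt (Fintype.card A) 1 with hA1 | hA2
  · haveI : Subsingleton A := Fintype.card_le_one_iff_subsingleton.mp hA1
    exact hnsurj (fun y => ⟨y, funext (fun g => Subsingleton.elim _ _)⟩)
  obtain ⟨S⟩ := hsofic
  -- local rule and memory set
  set hfun : (G → A) → A := fun x => Φ x 1 with hfun_def
  have hfc : Continuous hfun := (continuous_apply (1 : G)).comp hcont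
  obtain ⟨M, hM⟩ := sofic_exists_memory hfun hfc
  have hrep : ∀ (x : G → A) (g : G), Φ x g = hfun (fun t => x (g * t)) := by
    intro x g
    have h2 : shiftL g⁻¹ x = fun t => x (g * t) := by
      funext t; simp [shiftL]
    calc Φ x g = Φ x (g⁻¹⁻¹ * 1) := by rw [inv_inv, mul_one]
      _ = shiftL g⁻¹ (Φ x) 1 := rfl
      _ = Φ (shiftL g⁻¹ x) 1 := by rw [hequi]
      _ = hfun (fun t => x (g * t)) := by rw [hfun_def, h2]
  obtain ⟨N, hN⟩ := sofic_exists_decoder Φ hcont hinj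
  obtain ⟨F, z, hF1, hFz⟩ := sofic_exists_forbidden Φ hcont hnsurj
  -- constants
  set a : ℕ := Fintype.card A with ha_def
  set f : ℕ := F.card with hf_def
  have hf1 : 1 ≤ f := Finset.card_pos.2 ⟨1, hF1⟩
  set m : ℕ := a ^ f with hm_def
  have ham : a ≤ m := by rw [hm_def]; exact Nat.le_self_pow (by omega) a
  have hm2 : 2 ≤ m := le_trans hA2 ham
  have hmR : (2 : ℝ) ≤ (m : ℝ) := by exact_mod_cast hm2
  have hm1R : (0 : ℝ) < (m : ℝ) - 1 := by linarith
  set lm : ℝ := Real.log (m : ℝ) with hlm_def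
  set l1 : ℝ := Real.log ((m : ℝ) - 1) with hl1_def
  set L : ℝ := lm - l1 with hL_def
  have hL : 0 < L := by
    have h0 := Real.log_lt_log hm1R (by linarith : (m : ℝ) - 1 < m)
    rw [hL_def, hlm_def, hl1_def]; linarith
  have hlm0 : 0 ≤ lm := by rw [hlm_def]; exact Real.log_nonneg (by linarith)
  set fr : ℝ := ((f * f : ℕ) : ℝ) with hfr_def
  have hfr0 : 0 ≤ fr := Nat.cast_nonneg _
  have hden : 0 < 2 * (L + fr * lm) := by nlinarith
  set ε : ℝ := L / (2 * (L + fr * lm)) with hε_def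
  have hε : 0 < ε := div_pos hL hden
  -- condition index sets
  set M' : Finset G := insert 1 M with hM'_def
  set W' : Finset G := insert 1 (N ∪ F) with hW'_def
  set C : ℕ := (M' ×ˢ W').card + (F ×ˢ F).card with hC_def
  have hCpos : 0 < C := by
    have h0 : ((1 : G), (1 : G)) ∈ M' ×ˢ W' := by
      rw [hM'_def, hW'_def]
      exact Finset.mem_product.2 ⟨Finset.mem_insert_self _ _, Finset.mem_insert_self _ _⟩
    have h1 := Finset.card_pos.2 ⟨_, h0⟩
    rw [hC_def]; omega
  have hCne : ((C : ℕ) : ℝ) ≠ 0 := by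
    have : (0 : ℝ) < (C : ℝ) := by exact_mod_cast hCpos
    exact this.ne'
  set δ : ℝ := ε / C with hδ_def
  have hδ : 0 < δ := div_pos hε (by exact_mod_cast hCpos)
  have hδ1 : (1 : ℝ) - δ < 1 := by linarith
  -- choose a good sofic approximation level, packaged with opaque `d`, `σ`
  obtain ⟨d, σ, hd0, hGmulcard, hGfreecard⟩ :
      ∃ (d : ℕ) (σ : G → Equiv.Perm (Fin d)), 0 < d ∧
        (∀ mg ∈ M' ×ˢ W', (1 - δ) * d <
          ((Finset.univ.filter (fun k : Fin d =>
            σ (mg.1⁻¹ * mg.2⁻¹) k = σ mg.1⁻¹ (σ mg.2⁻¹ k))).card : ℝ)) ∧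
        (∀ gh ∈ F ×ˢ F, (1 - δ) * d <
          ((Finset.univ.filter (fun k : Fin d =>
            gh.1 ≠ gh.2 → σ gh.1⁻¹ k ≠ σ gh.2⁻¹ k)).card : ℝ)) := by
    have hev1 : ∀ᶠ i in atTop, ∀ mg ∈ M' ×ˢ W',
        1 - δ < (({k : Fin (S.d i) | S.σ i (mg.1⁻¹ * mg.2⁻¹) k =
          S.σ i mg.1⁻¹ (S.σ i mg.2⁻¹ k)} : Set (Fin (S.d i))).ncard : ℝ) / (S.d i) := by
      rw [Finset.eventually_all]
      intro mg _
      exact (S.approx_mul mg.1⁻¹ mg.2⁻¹).eventually (eventually_gt_nhds hδ1)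
    have hev2 : ∀ᶠ i in atTop, ∀ gh ∈ F ×ˢ F, gh.1 ≠ gh.2 →
        1 - δ < (({k : Fin (S.d i) | S.σ i gh.1⁻¹ k ≠ S.σ i gh.2⁻¹ k} :
          Set (Fin (S.d i))).ncard : ℝ) / (S.d i) := by
      rw [Finset.eventually_all]
      intro gh _
      by_cases hgh : gh.1 = gh.2
      · exact Eventually.of_forall (fun i h => absurd hgh h)
      · have hev := (S.approx_free gh.1⁻¹ gh.2⁻¹
          (fun h => hgh (inv_injective h))).eventually (eventually_gt_nhds hδ1)
        filter_upwards [hev] with i hi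
        exact fun _ => hi
    obtain ⟨i, h1all, h2all⟩ := (hev1.and hev2).exists
    have hdpos : (0 : ℝ) < (S.d i : ℝ) := by exact_mod_cast S.d_pos i
    refine ⟨S.d i, S.σ i, S.d_pos i, ?_, ?_⟩
    · intro mg hmg
      have h := h1all mg hmg
      rw [sofic_ncard_eq] at h
      exact (lt_div_iff₀ hdpos).1 h
    · intro gh hgh
      by_cases hne : gh.1 = gh.2
      · have heq : (Finset.univ.filter (fun k : Fin (S.d i) =>
            gh.1 ≠ gh.2 → S.σ i gh.1⁻¹ k ≠ S.σ i gh.2⁻¹ k)) = Finset.univ :=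
          Finset.filter_true_of_mem (fun k _ h => absurd hne h)
        rw [heq, Finset.card_univ, Fintype.card_fin]
        nlinarith
      · have h := h2all gh hgh hne
        rw [sofic_ncard_eq] at h
        have h' := (lt_div_iff₀ hdpos).1 h
        have heq : (Finset.univ.filter (fun k : Fin (S.d i) =>
            gh.1 ≠ gh.2 → S.σ i gh.1⁻¹ k ≠ S.σ i gh.2⁻¹ k)) =
            (Finset.univ.filter (fun k : Fin (S.d i) =>
              S.σ i gh.1⁻¹ k ≠ S.σ i gh.2⁻¹ k)) := by
          ext k
          simp [hne]
        rw [heq]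
        exact h'
  have hdR : (0 : ℝ) < d := by exact_mod_cast hd0
  -- the good set
  set Good : Finset (Fin d) := Finset.univ.filter (fun k =>
    (∀ mg ∈ M' ×ˢ W', σ (mg.1⁻¹ * mg.2⁻¹) k = σ mg.1⁻¹ (σ mg.2⁻¹ k)) ∧
    (∀ gh ∈ F ×ˢ F, gh.1 ≠ gh.2 → σ gh.1⁻¹ k ≠ σ gh.2⁻¹ k)) with hGood_def
  set Bad : Finset (Fin d) := Finset.univ \ Good with hBad_def
  have gmulspec : ∀ k ∈ Good, ∀ mg ∈ M' ×ˢ W',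
      σ (mg.1⁻¹ * mg.2⁻¹) k = σ mg.1⁻¹ (σ mg.2⁻¹ k) := by
    intro k hk
    rw [hGood_def, Finset.mem_filter] at hk
    exact hk.2.1
  have gfreespec : ∀ k ∈ Good, ∀ g ∈ F, ∀ h ∈ F, g ≠ h → σ g⁻¹ k ≠ σ h⁻¹ k := by
    intro k hk g hg h hh hne
    rw [hGood_def, Finset.mem_filter] at hk
    exact hk.2.2 (g, h) (Finset.mem_product.2 ⟨hg, hh⟩) hne
  have gfix : ∀ k ∈ Good, σ (1 : G) k = k := by
    intro k hk
    have h11 := gmulspec k hk ((1 : G), (1 : G)) (by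
      rw [hM'_def, hW'_def]
      exact Finset.mem_product.2 ⟨Finset.mem_insert_self _ _, Finset.mem_insert_self _ _⟩)
    simp only [inv_one, mul_one] at h11
    exact ((σ 1).injective h11).symm
  -- bound on the bad set
  have hBadcard : ((Bad.card : ℕ) : ℝ) ≤ ε * d := by
    have hsub : Bad ⊆ ((M' ×ˢ W').biUnion (fun mg => Finset.univ \
          (Finset.univ.filter (fun k : Fin d =>
            σ (mg.1⁻¹ * mg.2⁻¹) k = σ mg.1⁻¹ (σ mg.2⁻¹ k))))) ∪
        ((F ×ˢ F).biUnion (fun gh => Finset.univ \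
          (Finset.univ.filter (fun k : Fin d =>
            gh.1 ≠ gh.2 → σ gh.1⁻¹ k ≠ σ gh.2⁻¹ k)))) := by
      intro k hk
      have hkG : k ∉ Good := by
        rw [hBad_def, Finset.mem_sdiff] at hk
        exact hk.2
      by_cases h1 : ∀ mg ∈ M' ×ˢ W', σ (mg.1⁻¹ * mg.2⁻¹) k = σ mg.1⁻¹ (σ mg.2⁻¹ k)
      · have h2 : ¬ ∀ gh ∈ F ×ˢ F, gh.1 ≠ gh.2 → σ gh.1⁻¹ k ≠ σ gh.2⁻¹ k := by
          intro h2
          exact hkG (by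
            rw [hGood_def]
            exact Finset.mem_filter.2 ⟨Finset.mem_univ k, h1, h2⟩)
        push_neg at h2
        obtain ⟨gh, hgh, hne, heq⟩ := h2
        refine Finset.mem_union_right _ (Finset.mem_biUnion.2 ⟨gh, hgh, ?_⟩)
        refine Finset.mem_sdiff.2 ⟨Finset.mem_univ k, ?_⟩
        intro hmem
        exact (Finset.mem_filter.1 hmem).2 hne heq
      · push_neg at h1
        obtain ⟨mg, hmg, hkmg⟩ := h1
        refine Finset.mem_union_left _ (Finset.mem_biUnion.2 ⟨mg, hmg, ?_⟩)
        refine Finset.mem_sdiff.2 ⟨Finset.mem_univ k, ?_⟩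
        intro hmem
        exact hkmg (Finset.mem_filter.1 hmem).2
    have hsingle1 : ∀ mg ∈ M' ×ˢ W', (((Finset.univ \
        (Finset.univ.filter (fun k : Fin d =>
          σ (mg.1⁻¹ * mg.2⁻¹) k = σ mg.1⁻¹ (σ mg.2⁻¹ k)))).card : ℕ) : ℝ) ≤ δ * d := by
      intro mg hmg
      rw [Finset.card_sdiff_of_subset (Finset.subset_univ _), Finset.card_univ, Fintype.card_fin]
      have h1 := hGmulcard mg hmg
      have h2 : (Finset.univ.filter (fun k : Fin d =>
          σ (mg.1⁻¹ * mg.2⁻¹) k = σ mg.1⁻¹ (σ mg.2⁻¹ k))).card ≤ d := by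
        have := Finset.card_filter_le (Finset.univ : Finset (Fin d))
          (fun k : Fin d => σ (mg.1⁻¹ * mg.2⁻¹) k = σ mg.1⁻¹ (σ mg.2⁻¹ k))
        rwa [Finset.card_univ, Fintype.card_fin] at this
      rw [Nat.cast_sub h2]
      nlinarith
    have hsingle2 : ∀ gh ∈ F ×ˢ F, (((Finset.univ \
        (Finset.univ.filter (fun k : Fin d =>
          gh.1 ≠ gh.2 → σ gh.1⁻¹ k ≠ σ gh.2⁻¹ k))).card : ℕ) : ℝ) ≤ δ * d := by
      intro gh hgh
      rw [Finset.card_sdiff_of_subset (Finset.subset_univ _), Finset.card_univ, Fintype.card_fin]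
      have h1 := hGfreecard gh hgh
      have h2 : (Finset.univ.filter (fun k : Fin d =>
          gh.1 ≠ gh.2 → σ gh.1⁻¹ k ≠ σ gh.2⁻¹ k)).card ≤ d := by
        have := Finset.card_filter_le (Finset.univ : Finset (Fin d))
          (fun k : Fin d => gh.1 ≠ gh.2 → σ gh.1⁻¹ k ≠ σ gh.2⁻¹ k)
        rwa [Finset.card_univ, Fintype.card_fin] at this
      rw [Nat.cast_sub h2]
      nlinarith
    have hb1 : Bad.card ≤ ((M' ×ˢ W').biUnion (fun mg => Finset.univ \
          (Finset.univ.filter (fun k : Fin d =>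
            σ (mg.1⁻¹ * mg.2⁻¹) k = σ mg.1⁻¹ (σ mg.2⁻¹ k))))).card +
        ((F ×ˢ F).biUnion (fun gh => Finset.univ \
          (Finset.univ.filter (fun k : Fin d =>
            gh.1 ≠ gh.2 → σ gh.1⁻¹ k ≠ σ gh.2⁻¹ k)))).card :=
      le_trans (Finset.card_le_card hsub) (Finset.card_union_le _ _)
    have hb2 : ((((M' ×ˢ W').biUnion (fun mg => Finset.univ \
          (Finset.univ.filter (fun k : Fin d =>
            σ (mg.1⁻¹ * mg.2⁻¹) k = σ mg.1⁻¹ (σ mg.2⁻¹ k))))).card : ℕ) : ℝ) ≤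
        ((M' ×ˢ W').card : ℝ) * (δ * d) := by
      have hc : (((M' ×ˢ W').biUnion (fun mg => Finset.univ \
          (Finset.univ.filter (fun k : Fin d =>
            σ (mg.1⁻¹ * mg.2⁻¹) k = σ mg.1⁻¹ (σ mg.2⁻¹ k))))).card : ℕ) ≤
          ∑ mg ∈ M' ×ˢ W', (Finset.univ \
          (Finset.univ.filter (fun k : Fin d =>
            σ (mg.1⁻¹ * mg.2⁻¹) k = σ mg.1⁻¹ (σ mg.2⁻¹ k)))).card :=
        Finset.card_biUnion_le
      calc ((((M' ×ˢ W').biUnion (fun mg => Finset.univ \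
          (Finset.univ.filter (fun k : Fin d =>
            σ (mg.1⁻¹ * mg.2⁻¹) k = σ mg.1⁻¹ (σ mg.2⁻¹ k))))).card : ℕ) : ℝ)
          ≤ ∑ mg ∈ M' ×ˢ W', (((Finset.univ \
            (Finset.univ.filter (fun k : Fin d =>
              σ (mg.1⁻¹ * mg.2⁻¹) k = σ mg.1⁻¹ (σ mg.2⁻¹ k)))).card : ℕ) : ℝ) := by
            exact_mod_cast hc
        _ ≤ ∑ _mg ∈ M' ×ˢ W', δ * d := Finset.sum_le_sum hsingle1
        _ = ((M' ×ˢ W').card : ℝ) * (δ * d) := by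
            rw [Finset.sum_const]; simp
    have hb3 : ((((F ×ˢ F).biUnion (fun gh => Finset.univ \
          (Finset.univ.filter (fun k : Fin d =>
            gh.1 ≠ gh.2 → σ gh.1⁻¹ k ≠ σ gh.2⁻¹ k)))).card : ℕ) : ℝ) ≤
        ((F ×ˢ F).card : ℝ) * (δ * d) := by
      have hc : (((F ×ˢ F).biUnion (fun gh => Finset.univ \
          (Finset.univ.filter (fun k : Fin d =>
            gh.1 ≠ gh.2 → σ gh.1⁻¹ k ≠ σ gh.2⁻¹ k)))).card : ℕ) ≤
          ∑ gh ∈ F ×ˢ F, (Finset.univ \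
          (Finset.univ.filter (fun k : Fin d =>
            gh.1 ≠ gh.2 → σ gh.1⁻¹ k ≠ σ gh.2⁻¹ k))).card :=
        Finset.card_biUnion_le
      calc ((((F ×ˢ F).biUnion (fun gh => Finset.univ \
          (Finset.univ.filter (fun k : Fin d =>
            gh.1 ≠ gh.2 → σ gh.1⁻¹ k ≠ σ gh.2⁻¹ k)))).card : ℕ) : ℝ)
          ≤ ∑ gh ∈ F ×ˢ F, (((Finset.univ \
            (Finset.univ.filter (fun k : Fin d =>
              gh.1 ≠ gh.2 → σ gh.1⁻¹ k ≠ σ gh.2⁻¹ k))).card : ℕ) : ℝ) := by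
            exact_mod_cast hc
        _ ≤ ∑ _gh ∈ F ×ˢ F, δ * d := Finset.sum_le_sum hsingle2
        _ = ((F ×ˢ F).card : ℝ) * (δ * d) := by
            rw [Finset.sum_const]; simp
    have hδεd : ((M' ×ˢ W').card : ℝ) * (δ * d) + ((F ×ˢ F).card : ℝ) * (δ * d) = ε * d := by
      have h0 : ((M' ×ˢ W').card : ℝ) + ((F ×ˢ F).card : ℝ) = (C : ℝ) := by
        rw [hC_def]; push_cast; ring
      have h1 : ((M' ×ˢ W').card : ℝ) * (δ * d) + ((F ×ˢ F).card : ℝ) * (δ * d) =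
          ((C : ℝ)) * (δ * d) := by rw [← h0]; ring
      rw [h1, hδ_def]
      field_simp
    have hb1' : ((Bad.card : ℕ) : ℝ) ≤
        ((((M' ×ˢ W').biUnion (fun mg => Finset.univ \
          (Finset.univ.filter (fun k : Fin d =>
            σ (mg.1⁻¹ * mg.2⁻¹) k = σ mg.1⁻¹ (σ mg.2⁻¹ k))))).card : ℕ) : ℝ) +
        ((((F ×ˢ F).biUnion (fun gh => Finset.univ \
          (Finset.univ.filter (fun k : Fin d =>
            gh.1 ≠ gh.2 → σ gh.1⁻¹ k ≠ σ gh.2⁻¹ k)))).card : ℕ) : ℝ) := by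
      exact_mod_cast hb1
    linarith
  -- the microstate map
  set Ψ : (Fin d → A) → (Fin d → A) := fun b k => hfun (fun t => b (σ t⁻¹ k)) with hΨ_def
  have lemA : ∀ (b : Fin d → A) (k : Fin d), k ∈ Good → ∀ g ∈ N ∪ F,
      Φ (fun t => b (σ t⁻¹ k)) g = Ψ b (σ g⁻¹ k) := by
    intro b k hk g hg
    rw [hrep]
    show hfun (fun t => b (σ (g * t)⁻¹ k)) = hfun (fun t => b (σ t⁻¹ (σ g⁻¹ k)))
    apply hM
    intro t ht
    have hcond := gmulspec k hk (t, g) (by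
      rw [hM'_def, hW'_def]
      exact Finset.mem_product.2 ⟨Finset.mem_insert_of_mem ht, Finset.mem_insert_of_mem hg⟩)
    rw [mul_inv_rev]
    rw [hcond]
  -- lower bound: Ψ is injective given values on Bad
  have hdec : ∀ b b', Ψ b = Ψ b' → (∀ k ∈ Bad, b k = b' k) → b = b' := by
    intro b b' hbb hbad
    funext k
    by_cases hk : k ∈ Good
    · have hfix := gfix k hk
      have h1 : ∀ g ∈ N, Φ (fun t => b (σ t⁻¹ k)) g = Φ (fun t => b' (σ t⁻¹ k)) g := by
        intro g hg
        rw [lemA b k hk g (Finset.mem_union_left _ hg),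
          lemA b' k hk g (Finset.mem_union_left _ hg), hbb]
      have h2 := hN _ _ h1
      simpa [inv_one, hfix] using h2
    · refine hbad k ?_
      rw [hBad_def]
      exact Finset.mem_sdiff.2 ⟨Finset.mem_univ k, hk⟩
  have hlow : a ^ d ≤ (Finset.image Ψ Finset.univ).card * a ^ Bad.card := by
    rw [ha_def]
    exact sofic_lower_bound Ψ Bad hdec
  -- greedy selection of disjoint windows
  set W : Fin d → Finset (Fin d) := fun k => F.image (fun g => σ g⁻¹ k) with hW_def
  have hWmem : ∀ (k : Fin d) (j : Fin d), j ∈ W k ↔ ∃ g ∈ F, σ g⁻¹ k = j := by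
    intro k j
    rw [hW_def]
    simp [Finset.mem_image]
  have hself : ∀ k ∈ Good, k ∈ W k := by
    intro k hk
    rw [hWmem]
    exact ⟨1, hF1, by rw [inv_one, gfix k hk]⟩
  have hsize : ∀ k ∈ Good, (W k).card ≤ f := by
    intro k _
    rw [hW_def, hf_def]
    exact Finset.card_image_le
  have hcount : ∀ p : Fin d, (Good.filter (fun k => p ∈ W k)).card ≤ f := by
    intro p
    have hsub : Good.filter (fun k => p ∈ W k) ⊆ F.image (fun g => (σ g⁻¹).symm p) := by
      intro k hk
      obtain ⟨hkG, hp⟩ := Finset.mem_filter.1 hk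
      obtain ⟨g, hgF, hgk⟩ := (hWmem k p).1 hp
      exact Finset.mem_image.2 ⟨g, hgF, by rw [← hgk]; exact Equiv.symm_apply_apply _ _⟩
    rw [hf_def]
    exact le_trans (Finset.card_le_card hsub) Finset.card_image_le
  obtain ⟨K', hK'G, hK'disj, hGoodle⟩ := sofic_greedy Good W f hself hsize hcount
  set κ : ℕ := K'.card with hκ_def
  -- window cardinality and total size
  have hWcard : ∀ k ∈ K', (W k).card = f := by
    intro k hk
    rw [hW_def, hf_def]
    apply Finset.card_image_of_injOn
    intro g hg h hh hgh
    by_contra hne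
    exact gfreespec k (hK'G hk) g hg h hh hne hgh
  have hfκd : f * κ ≤ d := by
    have h1 : (K'.biUnion W).card = ∑ k ∈ K', (W k).card := Finset.card_biUnion hK'disj
    have h2 : ∑ k ∈ K', (W k).card = κ * f := by
      rw [Finset.sum_congr rfl hWcard, Finset.sum_const, smul_eq_mul, hκ_def]
    have h3 : (K'.biUnion W).card ≤ d := by
      calc (K'.biUnion W).card ≤ Finset.univ.card := Finset.card_le_card (Finset.subset_univ _)
        _ = d := by rw [Finset.card_univ, Fintype.card_fin]
    rw [mul_comm, ← h2, ← h1]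
    exact h3
  -- upper bound
  have hupp : (Finset.image Ψ Finset.univ).card ≤ (m - 1) ^ κ * a ^ (d - f * κ) := by
    have h0 := sofic_upper_bound (Finset.image Ψ Finset.univ) K'
      (fun k (g : ↥F) => σ (↑g)⁻¹ k) (fun g : ↥F => z ↑g)
      (by
        intro k hk g g' he
        by_contra hne
        have he' : σ ((g : G))⁻¹ k = σ ((g' : G))⁻¹ k := he
        exact gfreespec k (hK'G hk) ↑g g.2 ↑g' g'.2 (fun h => hne (Subtype.ext h)) he')
      (by
        intro k hk k' hk' hkk' g g' he
        have he' : σ ((g : G))⁻¹ k = σ ((g' : G))⁻¹ k' := he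
        have hmem1 : σ ((g : G))⁻¹ k ∈ W k := (hWmem k _).2 ⟨↑g, g.2, rfl⟩
        have hmem2 : σ ((g : G))⁻¹ k ∈ W k' := by
          rw [he']
          exact (hWmem k' _).2 ⟨↑g', g'.2, rfl⟩
        exact Finset.disjoint_left.1 (hK'disj k hk k' hk' hkk') hmem1 hmem2)
      (by
        intro b hb k hk
        obtain ⟨x, _, rfl⟩ := Finset.mem_image.1 hb
        obtain ⟨g, hgF, hgne⟩ := hFz (fun t => x (σ t⁻¹ k))
        refine ⟨⟨g, hgF⟩, ?_⟩
        show Ψ x (σ g⁻¹ k) ≠ z g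
        rw [← lemA x k (hK'G hk) g (Finset.mem_union_right _ hgF)]
        exact hgne)
    rw [Fintype.card_coe] at h0
    rw [hm_def, ha_def, hf_def, hκ_def]
    exact h0
  -- combine counting bounds over ℕ
  have hapos : 0 < a := lt_trans Nat.zero_lt_one hA2
  have hcomb : m ^ κ ≤ (m - 1) ^ κ * m ^ Bad.card := by
    have h1 : a ^ d ≤ (m - 1) ^ κ * a ^ (d - f * κ) * a ^ Bad.card := by
      calc a ^ d ≤ (Finset.image Ψ Finset.univ).card * a ^ Bad.card := hlow
        _ ≤ (m - 1) ^ κ * a ^ (d - f * κ) * a ^ Bad.card := Nat.mul_le_mul hupp le_rfl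
    have h2 : a ^ d = a ^ (f * κ) * a ^ (d - f * κ) := by
      rw [← pow_add, Nat.add_sub_cancel' hfκd]
    have hpos : 0 < a ^ (d - f * κ) := pow_pos hapos _
    have h3 : a ^ (f * κ) ≤ (m - 1) ^ κ * a ^ Bad.card := by
      have h4 : a ^ (f * κ) * a ^ (d - f * κ) ≤
          ((m - 1) ^ κ * a ^ Bad.card) * a ^ (d - f * κ) := by
        rw [h2] at h1
        calc a ^ (f * κ) * a ^ (d - f * κ)
            ≤ (m - 1) ^ κ * a ^ (d - f * κ) * a ^ Bad.card := h1
          _ = ((m - 1) ^ κ * a ^ Bad.card) * a ^ (d - f * κ) := by ring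
      exact Nat.le_of_mul_le_mul_right h4 hpos
    calc m ^ κ = a ^ (f * κ) := by rw [hm_def, ← pow_mul]
      _ ≤ (m - 1) ^ κ * a ^ Bad.card := h3
      _ ≤ (m - 1) ^ κ * m ^ Bad.card :=
          Nat.mul_le_mul le_rfl (Nat.pow_le_pow_left ham _)
  -- pass to real logarithms
  have hcast : ((m : ℝ)) ^ κ ≤ ((m : ℝ) - 1) ^ κ * (m : ℝ) ^ Bad.card := by
    have h5 : (((m - 1 : ℕ)) : ℝ) = (m : ℝ) - 1 := by
      rw [Nat.cast_sub (by omega)]; simp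
    calc ((m : ℝ)) ^ κ = (((m ^ κ : ℕ)) : ℝ) := by push_cast; ring
      _ ≤ (((m - 1) ^ κ * m ^ Bad.card : ℕ) : ℝ) := by exact_mod_cast hcomb
      _ = ((m : ℝ) - 1) ^ κ * (m : ℝ) ^ Bad.card := by push_cast [h5]; ring
  have hlog : (κ : ℝ) * L ≤ (Bad.card : ℝ) * lm := by
    have hpos1 : (0 : ℝ) < ((m : ℝ)) ^ κ := by positivity
    have hlogle := Real.log_le_log hpos1 hcast
    rw [Real.log_pow, Real.log_mul (pow_pos hm1R κ).ne'
      (pow_pos (by linarith : (0:ℝ) < (m : ℝ)) Bad.card).ne',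
      Real.log_pow, Real.log_pow] at hlogle
    rw [hL_def, hlm_def, hl1_def]
    linarith
  -- size relation
  have hsize2 : (d : ℝ) ≤ (Bad.card : ℝ) + fr * κ := by
    have h1 : Good.card + Bad.card = d := by
      have h2 : Bad.card = (Finset.univ : Finset (Fin d)).card - Good.card := by
        rw [hBad_def]
        exact Finset.card_sdiff_of_subset (Finset.subset_univ _)
      have h3 : Good.card ≤ (Finset.univ : Finset (Fin d)).card :=
        Finset.card_le_card (Finset.subset_univ Good)
      rw [Finset.card_univ, Fintype.card_fin] at h2 h3
      omega
    have h4 : (d : ℝ) ≤ (Bad.card : ℝ) + ((f * f * κ : ℕ) : ℝ) := by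
      have h5 : d ≤ Bad.card + f * f * κ := by
        have h6 : Good.card ≤ f * f * κ := hGoodle
        omega
      exact_mod_cast h5
    rw [hfr_def]
    push_cast at h4 ⊢
    linarith
  -- final contradiction
  have hεmul : ε * (2 * (L + fr * lm)) = L := by
    rw [hε_def]
    field_simp
  have h3fin : (Bad.card : ℝ) * (2 * (L + fr * lm)) ≤ (d : ℝ) * L := by
    calc (Bad.card : ℝ) * (2 * (L + fr * lm)) ≤ (ε * d) * (2 * (L + fr * lm)) :=
          mul_le_mul_of_nonneg_right hBadcard hden.le
      _ = (d : ℝ) * (ε * (2 * (L + fr * lm))) := by ring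
      _ = (d : ℝ) * L := by rw [hεmul]
  exact sofic_numeric_real hL hlm0 hfr0 (Nat.cast_nonneg _) (Nat.cast_nonneg _)
    (by exact_mod_cast hd0) hlog hsize2 h3fin


end Sofic
end
end
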